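/- arXiv:1505.06983 — 8 statements merged into one kernel-verified Lean document; each statement's English description precedes it below -/
import Mathlib

section
/- Let m ≥ 1 and p be integers, d = gcd(p, m), q = m/d, and let f(x), g(x) ∈ ℤ[x]. Then Coker f(X_m^p) is isomorphic as an abelian group to the direct sum of d copies of Coker f(X_q), and Coker [f(X_m^p) g(X_m^p)] is isomorphic to the direct sum of d copies of Coker [f(X_q) g(X_q)]. -/
open Matrix Polynomial

/-- The `m × m` permutation matrix over `ℤ` of the cyclic permutation `(1,2,…,m)`:
its `(i,j)` entry is `1` iff `i ≡ j + 1 (mod m)`. -/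
def cycMat (m : ℕ) : Matrix (Fin m) (Fin m) ℤ :=
  Matrix.of fun i j => if ((j : ℕ) + 1) % m = (i : ℕ) then 1 else 0

/-- `X_m ^ p` for an integer exponent `p`, well defined since `X_m ^ m = 1`. -/
def cycMatZPow (m : ℕ) (p : ℤ) : Matrix (Fin m) (Fin m) ℤ :=
  cycMat m ^ (p % (m : ℤ)).toNat

/-- The cokernel `ℤ^m / A·ℤ^n` of an integer matrix. -/
abbrev coker {m n : Type} [Fintype m] [Fintype n] (A : Matrix m n ℤ) :=
  (m → ℤ) ⧸ LinearMap.range A.mulVecLin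

open Kronecker

/-! Put `t = p mod m`, `d = gcd(m, t)` and `q = m / d`. The map `(a, b) ↦ a + b t (mod m)` is a
bijection `Fin d × Fin q → Fin m` that turns the shift `j ↦ j + t` into `(a, b) ↦ (a, b + 1 mod q)`,
so the permutation matrix `X_m^p = X_m^t` is a simultaneous row and column permutation of the
block-diagonal matrix `1_d ⊗ X_q`. Evaluating a polynomial commutes with both operations, and
`[1_d ⊗ A  1_d ⊗ B]` is a column permutation of `1_d ⊗ [A  B]`. Permuting rows and columns does not
change the cokernel, and `Coker (1_d ⊗ B) ≅ (Coker B)^d`. -/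

namespace Nat

variable {m t : ℕ}

theorem add_mul_modEq_add_mul_iff {a a' b b' : ℕ} (ha : a < m.gcd t) (ha' : a' < m.gcd t)
    (hb : b < m / m.gcd t) (hb' : b' < m / m.gcd t) :
    a + b * t ≡ a' + b' * t [MOD m] ↔ a = a' ∧ b = b' := by
  refine ⟨fun h => ?_, fun ⟨rfl, rfl⟩ => rfl⟩
  have hm : 0 < m := Nat.pos_of_ne_zero (by rintro rfl; simp at hb)
  have mod_gcd : ∀ a b, a + b * t ≡ a [MOD m.gcd t] := fun a b => by
    simpa using (Nat.ModEq.refl a).add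
      ((Nat.modEq_zero_iff_dvd).2 (dvd_mul_of_dvd_right (Nat.gcd_dvd_right m t) b))
  have haa : a = a' := ((mod_gcd a b).symm.trans
    ((h.of_dvd (Nat.gcd_dvd_left m t)).trans (mod_gcd a' b'))).eq_of_lt_of_lt ha ha'
  subst haa
  exact ⟨rfl, ((h.add_left_cancel' a).cancel_right_div_gcd hm).eq_of_lt_of_lt hb hb'⟩

theorem add_mul_modEq_add_mod_mul (a b : ℕ) :
    a + b * t ≡ a + b % (m / m.gcd t) * t [MOD m] := by
  set q := m / m.gcd t
  obtain ⟨k, hk⟩ : m ∣ q * t := by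
    rw [Nat.div_mul_right_comm (Nat.gcd_dvd_left m t)]
    exact Nat.dvd_lcm_left m t
  have hsplit : a + b * t = a + b % q * t + m * (k * (b / q)) := by
    rw [show m * (k * (b / q)) = q * t * (b / q) by rw [hk]; ring]
    conv_lhs => rw [← Nat.mod_add_div b q]
    ring
  rw [hsplit]
  exact Nat.add_mul_mod_self_left _ _ _

end Nat

theorem cycMat_pow_apply (m t : ℕ) (i j : Fin m) :
    (cycMat m ^ t) i j = if ((j : ℕ) + t) % m = i then 1 else 0 := by
  induction t generalizing j with
  | zero => simp [one_apply, Nat.mod_eq_of_lt j.isLt, Fin.ext_iff, eq_comm]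
  | succ t ih =>
    have hj : ((j : ℕ) + 1) % m < m := Nat.mod_lt _ j.pos
    rw [pow_succ, mul_apply, Finset.sum_eq_single ⟨((j : ℕ) + 1) % m, hj⟩, ih]
    · simp [cycMat, Nat.add_right_comm (j : ℕ) 1 t, ← add_assoc]
    · intro k _ hk
      simp [cycMat, Ne.symm (Fin.val_ne_of_ne hk)]
    · simp

section Stride

variable (m t : ℕ) [NeZero m]

noncomputable def strideEquiv : Fin (m.gcd t) × Fin (m / m.gcd t) ≃ Fin m :=
  Equiv.ofBijective (fun x => Fin.ofNat m (x.1 + x.2 * t)) <| by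
    rw [Fintype.bijective_iff_injective_and_card]
    refine ⟨fun x y hxy => ?_, ?_⟩
    · obtain ⟨ha, hb⟩ := (Nat.add_mul_modEq_add_mul_iff x.1.isLt y.1.isLt x.2.isLt y.2.isLt).1
        (Fin.ext_iff.1 hxy)
      exact Prod.ext (Fin.ext ha) (Fin.ext hb)
    · simp [Nat.mul_div_cancel' (Nat.gcd_dvd_left m t)]

theorem strideEquiv_val (x : Fin (m.gcd t) × Fin (m / m.gcd t)) :
    (strideEquiv m t x : ℕ) = (x.1 + x.2 * t) % m := rfl

theorem cycMat_pow_eq_reindex_one_kronecker :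
    cycMat m ^ t = reindex (strideEquiv m t) (strideEquiv m t)
      ((1 : Matrix (Fin (m.gcd t)) (Fin (m.gcd t)) ℤ) ⊗ₖ cycMat (m / m.gcd t)) := by
  ext i j
  obtain ⟨⟨a, b⟩, rfl⟩ := (strideEquiv m t).surjective i
  obtain ⟨⟨a', b'⟩, rfl⟩ := (strideEquiv m t).surjective j
  have hb' : ((b' : ℕ) + 1) % (m / m.gcd t) < m / m.gcd t := Nat.mod_lt _ b'.pos
  have key : (((a' : ℕ) + b' * t) % m + t) % m = ((a : ℕ) + b * t) % m ↔
      (a' : ℕ) = a ∧ ((b' : ℕ) + 1) % (m / m.gcd t) = b := by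
    rw [← Nat.add_mul_modEq_add_mul_iff a'.isLt a.isLt hb' b.isLt, Nat.ModEq, Nat.mod_add_mod,
      ← (Nat.add_mul_modEq_add_mod_mul _ _ : _ ≡ _ [MOD m])]
    ring_nf
  rw [reindex_apply, submatrix_apply, Equiv.symm_apply_apply, Equiv.symm_apply_apply,
    cycMat_pow_apply, strideEquiv_val, strideEquiv_val]
  simp only [key, kroneckerMap_apply, one_apply, cycMat, of_apply]
  simp only [Fin.val_inj, ite_zero_mul_ite_zero, mul_one, @eq_comm _ a']

end Stride

theorem one_kronecker_mulVec_apply {R ι m n : Type*} [Semiring R] [Fintype ι] [DecidableEq ι]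
    [Fintype n] (B : Matrix m n R) (v : ι × n → R) (x : ι × m) :
    ((1 : Matrix ι ι R) ⊗ₖ B *ᵥ v) x = (B *ᵥ fun j => v (x.1, j)) x.2 :=
  congrFun (vec_mul_eq_mulVec B (of fun j i => v (i, j))).symm x

theorem aeval_one_kronecker {R ι n : Type*} [CommSemiring R] [Fintype ι] [DecidableEq ι]
    [Fintype n] [DecidableEq n] (A : Matrix n n R) (f : R[X]) :
    aeval ((1 : Matrix ι ι R) ⊗ₖ A) f = (1 : Matrix ι ι R) ⊗ₖ aeval A f := by
  have h : ∀ B : Matrix n n R,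
      ((kroneckerAlgEquiv ι n R).toAlgHom.comp Algebra.TensorProduct.includeRight) B =
        (1 : Matrix ι ι R) ⊗ₖ B := fun B => by
    ext; simp [kroneckerLinearEquiv]
  rw [← h, ← h, aeval_algHom_apply]

theorem aeval_reindex {R m n : Type*} [CommSemiring R] [Fintype m] [DecidableEq m]
    [Fintype n] [DecidableEq n] (e : m ≃ n) (A : Matrix m m R) (f : R[X]) :
    aeval (reindex e e A) f = reindex e e (aeval A f) := by
  rw [← coe_reindexAlgEquiv R R, ← AlgEquiv.coe_toAlgHom, aeval_algHom_apply]

theorem fromCols_reindex_one_kronecker {R ι m n n' m' k k' : Type*} [MulZeroOneClass R]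
    [DecidableEq ι] (e : ι × m ≃ m') (e₁ : ι × n ≃ k) (e₂ : ι × n' ≃ k')
    (A : Matrix m n R) (B : Matrix m n' R) :
    fromCols (reindex e e₁ ((1 : Matrix ι ι R) ⊗ₖ A)) (reindex e e₂ ((1 : Matrix ι ι R) ⊗ₖ B)) =
      reindex e ((Equiv.prodSumDistrib ι n n').trans (e₁.sumCongr e₂))
        ((1 : Matrix ι ι R) ⊗ₖ fromCols A B) := by
  ext i (j | j) <;> simp [Equiv.prodSumDistrib]

section Coker

variable {ι m n m' n' : Type} [Fintype ι] [DecidableEq ι] [Fintype m] [Fintype n]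
  [Fintype m'] [Fintype n']

noncomputable def cokerReindexEquiv (e₁ : m ≃ m') (e₂ : n ≃ n') (A : Matrix m n ℤ) :
    coker (reindex e₁ e₂ A) ≃ₗ[ℤ] coker A :=
  Submodule.Quotient.equiv _ _ (LinearEquiv.funCongrLeft ℤ ℤ e₁) <| by
    ext w
    simp only [Submodule.mem_map, LinearMap.mem_range, mulVecLin_apply, reindex_apply]
    constructor
    · rintro ⟨_, ⟨v, rfl⟩, rfl⟩
      exact ⟨v ∘ e₂, by ext; simp [submatrix_mulVec_equiv]⟩
    · rintro ⟨v, rfl⟩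
      exact ⟨_, ⟨v ∘ e₂.symm, rfl⟩, by ext; simp [submatrix_mulVec_equiv, Function.comp_def]⟩

noncomputable def cokerOneKroneckerEquiv (B : Matrix m n ℤ) :
    coker ((1 : Matrix ι ι ℤ) ⊗ₖ B) ≃ₗ[ℤ] (ι → coker B) :=
  (Submodule.Quotient.equiv _ (Submodule.pi Set.univ fun _ => LinearMap.range B.mulVecLin)
    (LinearEquiv.curry ℤ ℤ ι m) <| by
      ext w
      simp only [Submodule.mem_map, Submodule.mem_pi, Set.mem_univ, forall_true_left,
        LinearMap.mem_range, mulVecLin_apply]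
      constructor
      · rintro ⟨_, ⟨v, rfl⟩, rfl⟩ i
        exact ⟨fun j => v (i, j), by ext; simp [one_kronecker_mulVec_apply]⟩
      · intro hw
        choose v hv using hw
        exact ⟨_, ⟨fun x => v x.1 x.2, rfl⟩, by ext; simp [one_kronecker_mulVec_apply, hv]⟩).trans
    (Submodule.quotientPi _)
end Coker

theorem stmt_1 (m : ℕ) (hm : 1 ≤ m) (p : ℤ) (d q : ℕ)
    (hd : d = Int.gcd p m) (hq : q = m / d) (f g : Polynomial ℤ) :
    Nonempty (coker (aeval (cycMatZPow m p) f) ≃+ (Fin d → coker (aeval (cycMat q) f))) ∧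
    Nonempty (coker (Matrix.fromCols (aeval (cycMatZPow m p) f) (aeval (cycMatZPow m p) g)) ≃+
      (Fin d → coker (Matrix.fromCols (aeval (cycMat q) f) (aeval (cycMat q) g)))) := by
  set t := (p % (m : ℤ)).toNat
  have : NeZero m := ⟨by omega⟩
  have hdt : d = m.gcd t := by
    rw [hd, ← Int.gcd_emod, ← Int.toNat_of_nonneg (Int.emod_nonneg p (by omega)),
      Int.gcd_natCast_natCast, Nat.gcd_comm]
  subst hdt hq
  have haeval (h : ℤ[X]) : aeval (cycMatZPow m p) h = reindex (strideEquiv m t)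
      (strideEquiv m t) (1 ⊗ₖ aeval (cycMat (m / m.gcd t)) h) := by
    rw [cycMatZPow, cycMat_pow_eq_reindex_one_kronecker, aeval_reindex, aeval_one_kronecker]
  rw [haeval, haeval, fromCols_reindex_one_kronecker]
  exact ⟨⟨((cokerReindexEquiv _ _ _).trans (cokerOneKroneckerEquiv _)).toAddEquiv⟩,
    ⟨((cokerReindexEquiv _ _ _).trans (cokerOneKroneckerEquiv _)).toAddEquiv⟩⟩
end

section
/- Let m ≥ 1 and p be integers and d = gcd(p, m). Then Coker (1_m − X_m^p) is a free abelian group of rank d, i.e. Coker (1_m − X_m^p) ≅ ℤ^d. -/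
open Matrix Polynomial

/-- `s_p(A) = 1 - A + A² - ⋯ + (-1)^(p-1) A^(p-1)` for a square integer matrix `A`. -/
def sMat {n : Type} [Fintype n] [DecidableEq n] (p : ℕ) (A : Matrix n n ℤ) :
    Matrix n n ℤ :=
  ∑ i ∈ Finset.range p, ((-1 : ℤ) ^ i) • A ^ i

/-!
The columns of `1 - X^k` are the differences `e j - e (j + k)`, and by telescoping they
span all `e a - e b` with `a ≡ b` modulo the subgroup `⟨k⟩` of `ℤ/m`. For any surjection
`f : α → β`, summing over the fibres of `f` identifies `ℤ^α` modulo the differences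
`e a - e b` with `f a = f b` with `ℤ^β`. Hence the cokernel is free on the cosets of `⟨k⟩`,
and there are `m / ord k = gcd(m, k)` of them.
-/

open Function Submodule

section FiberSum

variable (R : Type*) {α β : Type*} [Ring R] [Fintype α] [DecidableEq α] [DecidableEq β]

def fiberSum (f : α → β) : (α → R) →ₗ[R] (β → R) where
  toFun v b := ∑ a with f a = b, v a
  map_add' u v := by ext b; simp [Finset.sum_add_distrib]
  map_smul' r v := by ext b; simp [Finset.mul_sum]

def fiberDiffs (f : α → β) : Submodule R (α → R) :=
  span R {v | ∃ a b, f a = f b ∧ Pi.single a 1 - Pi.single b 1 = v}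

variable {R} {f : α → β}

theorem fiberSum_single (a : α) (r : R) : fiberSum R f (Pi.single a r) = Pi.single (f a) r := by
  ext b
  simp [fiberSum, Pi.single_apply, eq_comm]

variable [Fintype β]

theorem fiberSum_surjective (hf : Surjective f) : Surjective (fiberSum R f) := by
  intro w
  refine ⟨∑ b, Pi.single (surjInv hf b) (w b), ?_⟩
  simp only [map_sum, fiberSum_single, surjInv_eq hf, Finset.univ_sum_single]

theorem ker_fiberSum (hf : Surjective f) : LinearMap.ker (fiberSum R f) = fiberDiffs R f := by
  apply le_antisymm
  · intro v hv
    -- move every coordinate of `v` onto a fixed representative of its fibre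
    set s := fun a => surjInv hf (f a)
    have hzero : ∑ a, (Pi.single (s a) (v a) : α → R) = 0 := by
      rw [← Finset.sum_fiberwise _ f]
      refine Finset.sum_eq_zero fun b _ => ?_
      calc ∑ a with f a = b, (Pi.single (s a) (v a) : α → R)
          = ∑ a with f a = b, Pi.single (surjInv hf b) (v a) :=
            Finset.sum_congr rfl fun a ha => by rw [← (Finset.mem_filter.1 ha).2]
        _ = Pi.single (surjInv hf b) (fiberSum R f v b) :=
            (map_sum (AddMonoidHom.single (fun _ => R) (surjInv hf b)) _ _).symm
        _ = 0 := by rw [LinearMap.mem_ker.1 hv, Pi.zero_apply, Pi.single_zero]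
    have hdecomp : v = ∑ a, v a • (Pi.single a 1 - Pi.single (s a) 1 : α → R) := by
      simp only [smul_sub, ← Pi.single_smul', smul_eq_mul, mul_one, Finset.sum_sub_distrib,
        hzero, sub_zero, Finset.univ_sum_single]
    rw [hdecomp]
    exact sum_mem fun a _ => smul_mem _ _ (subset_span ⟨a, _, (surjInv_eq hf _).symm, rfl⟩)
  · refine span_le.mpr ?_
    rintro _ ⟨a, b, hab, rfl⟩
    simp [fiberSum_single, hab]

noncomputable def quotFiberDiffsEquiv (hf : Surjective f) :
    ((α → R) ⧸ fiberDiffs R f) ≃ₗ[R] (β → R) :=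
  (quotEquivOfEq _ _ (ker_fiberSum hf).symm).trans
    ((fiberSum R f).quotKerEquivOfSurjective (fiberSum_surjective hf))

end FiberSum

section Translation

variable {R G : Type*} [Ring R] [AddGroup G] [Finite G] [DecidableEq G]

theorem span_single_sub_single_add_eq_fiberDiffs (c : G) :
    span R (Set.range fun g => (Pi.single g 1 - Pi.single (g + c) 1 : G → R)) =
      fiberDiffs R (QuotientAddGroup.mk : G → G ⧸ AddSubgroup.zmultiples c) := by
  apply le_antisymm
  · refine span_le.mpr ?_
    rintro _ ⟨g, rfl⟩
    refine subset_span ⟨g, g + c, QuotientAddGroup.eq.mpr ?_, rfl⟩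
    rw [neg_add_cancel_left]
    exact AddSubgroup.mem_zmultiples c
  · refine span_le.mpr ?_
    rintro _ ⟨a, b, hab, rfl⟩
    obtain ⟨n, hn⟩ := mem_multiples_iff_mem_zmultiples.mpr (QuotientAddGroup.eq.mp hab)
    obtain rfl : b = a + n • c := by rw [← add_neg_cancel_left a b, ← hn]
    clear hab hn
    induction n with
    | zero => simp
    | succ n ih =>
      rw [succ_nsmul, ← add_assoc, ← sub_add_sub_cancel _ (Pi.single (a + n • c) 1)]
      exact add_mem ih (subset_span ⟨_, rfl⟩)

end Translation

section CyclicShift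

open Fin.NatCast Fin.CommRing

variable {m : ℕ} [NeZero m]

theorem cycMat_mulVec_single (j : Fin m) :
    cycMat m *ᵥ Pi.single j 1 = Pi.single (j + 1) 1 := by
  ext i
  have hval : ((j + 1 : Fin m) : ℕ) = ((j : ℕ) + 1) % m := by
    rw [Fin.val_add, Fin.val_one', Nat.add_mod_mod]
  simp [cycMat, Pi.single_apply, Fin.ext_iff, hval, eq_comm]

theorem cycMat_pow_mulVec_single (k : ℕ) (j : Fin m) :
    cycMat m ^ k *ᵥ Pi.single j 1 = Pi.single (j + k) 1 := by
  induction k with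
  | zero => rw [pow_zero, Matrix.one_mulVec, Nat.cast_zero, add_zero]
  | succ k ih =>
    rw [pow_succ', ← Matrix.mulVec_mulVec, ih, cycMat_mulVec_single, Nat.cast_succ, add_assoc]

theorem range_mulVecLin_one_sub_cycMat_pow (k : ℕ) :
    LinearMap.range (1 - cycMat m ^ k).mulVecLin =
      span ℤ (Set.range fun j : Fin m =>
        (Pi.single j 1 - Pi.single (j + k) 1 : Fin m → ℤ)) := by
  rw [Matrix.range_mulVecLin]
  congr 2
  funext j
  rw [← Matrix.mulVec_single_one, Matrix.sub_mulVec, Matrix.one_mulVec, cycMat_pow_mulVec_single]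

theorem card_quotient_zmultiples_natCast (k : ℕ) :
    Nat.card (Fin m ⧸ AddSubgroup.zmultiples (k : Fin m)) = m.gcd k := by
  have horder : addOrderOf (k : Fin m) = m / m.gcd k := by
    rw [← AddEquiv.addOrderOf_eq (ZMod.finEquiv m).toAddEquiv, RingEquiv.toAddEquiv_eq_coe,
      RingEquiv.coe_toAddEquiv, map_natCast, ZMod.addOrderOf_coe _ (NeZero.ne m)]
  have hlagrange := (AddSubgroup.zmultiples (k : Fin m)).index_mul_card
  rw [Nat.card_zmultiples, horder, Nat.card_eq_fintype_card, Fintype.card_fin] at hlagrange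
  have hpos : 0 < m / m.gcd k :=
    Nat.div_pos (Nat.gcd_le_left _ (NeZero.pos m)) (Nat.gcd_pos_of_pos_left _ (NeZero.pos m))
  exact Nat.eq_of_mul_eq_mul_right hpos
    (hlagrange.trans (Nat.mul_div_cancel' (m.gcd_dvd_left k)).symm)

theorem nonempty_coker_one_sub_cycMat_pow_equiv (k : ℕ) :
    Nonempty (coker (1 - cycMat m ^ k) ≃+ (Fin (m.gcd k) → ℤ)) := by
  classical
  let H := AddSubgroup.zmultiples (k : Fin m)
  have hrange : LinearMap.range (1 - cycMat m ^ k).mulVecLin =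
      fiberDiffs ℤ (QuotientAddGroup.mk : Fin m → Fin m ⧸ H) := by
    rw [range_mulVecLin_one_sub_cycMat_pow, span_single_sub_single_add_eq_fiberDiffs]
  exact ⟨((quotEquivOfEq _ _ hrange).trans (quotFiberDiffsEquiv QuotientAddGroup.mk_surjective)
    |>.trans (LinearEquiv.funCongrLeft ℤ ℤ
      (Finite.equivFinOfCardEq (card_quotient_zmultiples_natCast k)).symm)).toAddEquiv⟩

end CyclicShift

theorem stmt_2 (m : ℕ) (hm : 1 ≤ m) (p : ℤ) (d : ℕ) (hd : d = Int.gcd p m) :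
    Nonempty (coker (1 - cycMatZPow m p) ≃+ (Fin d → ℤ)) := by
  have : NeZero m := ⟨by omega⟩
  have hgcd : d = m.gcd (p % m).toNat := by
    rw [hd, ← Int.gcd_emod, Nat.gcd_comm, ← Int.gcd_natCast_natCast,
      Int.toNat_of_nonneg (Int.emod_nonneg p (by omega))]
  rw [hgcd]
  exact nonempty_coker_one_sub_cycMat_pow_equiv _
end

section
/- Let m, l ≥ 1 and p be integers and d = gcd(p, m). Then Coker (l·(1_m − X_m^p)) ≅ ℤ^d ⊕ (ℤ/lℤ)^{m−d}, and Coker [1_m − X_m^p l·1_m] ≅ (ℤ/lℤ)^d. -/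
open Matrix Polynomial

/-!
Write `d = gcd(p, m)` and `σ : ℤ^m → ℤ^d` for the map summing the coordinates in each residue
class modulo `d`. The image of `1 - X^p` is exactly `ker σ`: it lies in `ker σ` because `X^p`
permutes the coordinates within each residue class, and it contains every `e_i - e_j` with
`i ≡ j (mod d)` because `p` and `d` generate the same subgroup of `ℤ/m`. As `σ` is split by the
inclusion of the first `d` coordinates, `v ↦ (σ v, v_d, …, v_{m-1})` is a change of coordinates
of `ℤ^m` taking `ker σ` to `0 × ℤ^{m-d}`, from which both cokernels are read off.
-/

open Function Fin.NatCast Fin.CommRing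

theorem nonempty_coker_addEquiv_of_range_eq_ker {ι κ : Type} [Fintype ι] [Fintype κ] {M : Type*}
    [AddCommGroup M] {A : Matrix ι κ ℤ} (f : (ι → ℤ) →ₗ[ℤ] M) (hf : Surjective f)
    (h : LinearMap.range A.mulVecLin = LinearMap.ker f) : Nonempty (coker A ≃+ M) :=
  ⟨((Submodule.quotEquivOfEq _ _ h).trans (f.quotKerEquivOfSurjective hf)).toAddEquiv⟩

abbrev reduceMod (ι : Type*) (l : ℕ) : (ι → ℤ) →ₗ[ℤ] (ι → ZMod l) :=
  (Int.castAddHom (ZMod l)).toIntLinearMap.compLeft ι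

theorem reduceMod_eq_zero_iff {ι : Type*} {l : ℕ} {v : ι → ℤ} :
    reduceMod ι l v = 0 ↔ ∀ i, (l : ℤ) ∣ v i := by
  simp [funext_iff, ZMod.intCast_zmod_eq_zero_iff_dvd]

theorem reduceMod_surjective (ι : Type*) (l : ℕ) : Surjective (reduceMod ι l) :=
  (ZMod.intCast_surjective (n := l)).comp_left

section ResidueSum

variable (m d : ℕ)

def residueSum : (Fin m → ℤ) →ₗ[ℤ] (Fin d → ℤ) :=
  LinearMap.pi fun r => ∑ i : Fin m with i.val % d = r, LinearMap.proj i

def residueLift : (Fin d → ℤ) →ₗ[ℤ] (Fin m → ℤ) :=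
  LinearMap.pi fun i => if h : (i : ℕ) < d then LinearMap.proj ⟨i, h⟩ else 0

variable {m d}

theorem residueSum_apply (v : Fin m → ℤ) (r : Fin d) :
    residueSum m d v r = ∑ i : Fin m with i.val % d = r, v i := by
  simp [residueSum]

theorem residueLift_apply (x : Fin d → ℤ) (i : Fin m) :
    residueLift m d x i = if h : (i : ℕ) < d then x ⟨i, h⟩ else 0 := by
  simp only [residueLift, LinearMap.pi_apply]
  split_ifs <;> rfl

theorem residueSum_residueLift (hdm : d ≤ m) (x : Fin d → ℤ) :
    residueSum m d (residueLift m d x) = x := by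
  ext r
  rw [residueSum_apply, Finset.sum_eq_single_of_mem ⟨r, r.2.trans_le hdm⟩]
  · simp [residueLift_apply]
  · simp [Nat.mod_eq_of_lt r.2]
  · intro i hi hne
    rw [residueLift_apply, dif_neg]
    intro h
    simp only [Finset.mem_filter, Finset.mem_univ, true_and, Nat.mod_eq_of_lt h] at hi
    exact hne (Fin.ext hi)

theorem residueSum_single (hd : 0 < d) (i : Fin m) (c : ℤ) :
    residueSum m d (Pi.single i c) = Pi.single ⟨i.val % d, Nat.mod_lt _ hd⟩ c := by
  ext r
  rw [residueSum_apply, Finset.sum_pi_single']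
  simp [Pi.single_apply, Fin.ext_iff, eq_comm]

theorem residueLift_single (hdm : d ≤ m) (r : Fin d) (c : ℤ) :
    residueLift m d (Pi.single r c) = Pi.single (Fin.castLE hdm r) c := by
  ext i
  rw [residueLift_apply]
  split_ifs with h
  · simp [Pi.single_apply, Fin.ext_iff]
  · simp only [Pi.single_apply, Fin.ext_iff, Fin.val_castLE]
    omega

theorem residueSum_surjective (hdm : d ≤ m) : Surjective (residueSum m d) :=
  RightInverse.surjective (residueSum_residueLift hdm)

theorem sub_residueLift_residueSum_mem {W : Submodule ℤ (Fin m → ℤ)} (hd : 0 < d)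
    (hdm : d ≤ m) (hW : ∀ i j : Fin m, i.val % d = j.val % d → Pi.single i 1 - Pi.single j 1 ∈ W)
    (v : Fin m → ℤ) : v - residueLift m d (residueSum m d v) ∈ W := by
  suffices W.mkQ ∘ₗ (LinearMap.id - residueLift m d ∘ₗ residueSum m d) = 0 from
    (Submodule.Quotient.mk_eq_zero W).1 (LinearMap.congr_fun this v)
  refine (Pi.basisFun ℤ (Fin m)).ext fun i => ?_
  rw [Pi.basisFun_apply, LinearMap.comp_apply, LinearMap.sub_apply, LinearMap.id_apply,
    LinearMap.comp_apply, residueSum_single hd, residueLift_single hdm, LinearMap.zero_apply,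
    Submodule.mkQ_apply, Submodule.Quotient.mk_eq_zero]
  exact hW _ _ (Nat.mod_mod _ _).symm

end ResidueSum

section CokerMaps

variable (l m d : ℕ)

def smulCokerMap : (Fin m → ℤ) →ₗ[ℤ] (Fin d → ℤ) × (Fin (m - d) → ZMod l) :=
  (residueSum m d).prod
    (reduceMod _ l ∘ₗ LinearMap.funLeft ℤ ℤ fun s : Fin (m - d) => ⟨d + s, by omega⟩)

def fromColsCokerMap : (Fin m → ℤ) →ₗ[ℤ] (Fin d → ZMod l) :=
  reduceMod _ l ∘ₗ residueSum m d

variable {m d}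

theorem smulCokerMap_apply (v : Fin m → ℤ) :
    smulCokerMap l m d v =
      (residueSum m d v, fun s : Fin (m - d) => (v ⟨d + s, by omega⟩ : ZMod l)) :=
  rfl

theorem smulCokerMap_eq_zero_iff {v : Fin m → ℤ} :
    smulCokerMap l m d v = 0 ↔
      residueSum m d v = 0 ∧ ∀ s : Fin (m - d), (l : ℤ) ∣ v ⟨d + s, by omega⟩ := by
  simp [smulCokerMap_apply, Prod.ext_iff, funext_iff, ZMod.intCast_zmod_eq_zero_iff_dvd]

theorem smulCokerMap_surjective (hdm : d ≤ m) : Surjective (smulCokerMap l m d) := by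
  rintro ⟨a, c⟩
  obtain ⟨c', rfl⟩ := reduceMod_surjective _ l c
  let high : Fin (m - d) → Fin m := fun s => ⟨d + s, by omega⟩
  have high_inj : Injective high := fun s t h => by
    simpa [high, Fin.ext_iff] using h
  let w : Fin m → ℤ := extend high c' 0
  refine ⟨w + residueLift m d (a - residueSum m d w), ?_⟩
  rw [smulCokerMap_apply]
  ext s
  · simp [residueSum_residueLift hdm]
  · simpa [residueLift_apply] using congrArg _ (high_inj.extend_apply c' 0 s)

theorem fromColsCokerMap_surjective (hdm : d ≤ m) : Surjective (fromColsCokerMap l m d) :=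
  (reduceMod_surjective _ l).comp (residueSum_surjective hdm)

theorem dvd_of_residueSum_eq_zero {v : Fin m → ℤ} {c : ℤ} (hv : residueSum m d v = 0)
    (hc : ∀ j : Fin m, d ≤ j → c ∣ v j) (i : Fin m) : c ∣ v i := by
  by_cases hi : d ≤ (i : ℕ)
  · exact hc i hi
  let s : Finset (Fin m) := {j | j.val % d = i}
  have hi_mem : i ∈ s := by simp [s, Nat.mod_eq_of_lt (not_le.1 hi)]
  have hsum : v i + ∑ j ∈ s.erase i, v j = 0 := by
    rw [Finset.add_sum_erase _ _ hi_mem, ← residueSum_apply (r := ⟨i, by omega⟩), hv, Pi.zero_apply]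
  refine (dvd_add_left (Finset.dvd_sum fun j hj => hc j ?_)).1 (hsum ▸ dvd_zero c)
  simp only [s, Finset.mem_erase, Finset.mem_filter, Finset.mem_univ, true_and] at hj
  by_contra hj'
  exact hj.1 (Fin.ext (by rw [← hj.2, Nat.mod_eq_of_lt (by omega)]))

variable {l} {κ : Type} [Fintype κ] {A : Matrix (Fin m) κ ℤ}

theorem range_smul_mulVecLin_eq_ker (hl : l ≠ 0)
    (hA : LinearMap.range A.mulVecLin = LinearMap.ker (residueSum m d)) :
    LinearMap.range ((l : ℤ) • A).mulVecLin = LinearMap.ker (smulCokerMap l m d) := by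
  ext v
  simp only [LinearMap.mem_range, LinearMap.mem_ker, smulCokerMap_eq_zero_iff,
    Matrix.mulVecLin_apply, Matrix.smul_mulVec]
  constructor
  · rintro ⟨x, rfl⟩
    have hx : A *ᵥ x ∈ LinearMap.ker (residueSum m d) := hA ▸ ⟨x, rfl⟩
    rw [LinearMap.mem_ker] at hx
    exact ⟨by rw [map_smul, hx, smul_zero], fun s => Dvd.intro _ rfl⟩
  · rintro ⟨hσ, hhigh⟩
    have hdvd : ∀ i, (l : ℤ) ∣ v i := dvd_of_residueSum_eq_zero hσ fun j hj => by
      simpa [show d + ((j : ℕ) - d) = j by omega] using hhigh ⟨j - d, by omega⟩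
    choose w hw using hdvd
    obtain rfl : v = (l : ℤ) • w := funext hw
    have hw0 : w ∈ LinearMap.ker (residueSum m d) := by
      rw [map_smul] at hσ
      rw [LinearMap.mem_ker]
      exact (smul_eq_zero.1 hσ).resolve_left (by exact_mod_cast hl)
    obtain ⟨x, rfl⟩ := hA ▸ hw0
    exact ⟨x, rfl⟩

theorem range_fromCols_mulVecLin_eq_ker (hdm : d ≤ m)
    (hA : LinearMap.range A.mulVecLin = LinearMap.ker (residueSum m d)) :
    LinearMap.range (Matrix.fromCols A ((l : ℤ) • (1 : Matrix (Fin m) (Fin m) ℤ))).mulVecLin =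
      LinearMap.ker (fromColsCokerMap l m d) := by
  ext v
  simp only [LinearMap.mem_range, LinearMap.mem_ker, fromColsCokerMap, LinearMap.comp_apply,
    reduceMod_eq_zero_iff, Matrix.mulVecLin_apply]
  constructor
  · rintro ⟨y, rfl⟩
    have hx : A *ᵥ (y ∘ Sum.inl) ∈ LinearMap.ker (residueSum m d) := hA ▸ ⟨_, rfl⟩
    rw [LinearMap.mem_ker] at hx
    rw [Matrix.fromCols_mulVec, map_add, hx, Matrix.smul_mulVec, Matrix.one_mulVec, map_smul]
    exact fun i => Dvd.intro _ (zero_add _).symm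
  · intro hv
    choose z hz using hv
    have hker : v - (l : ℤ) • residueLift m d z ∈ LinearMap.ker (residueSum m d) := by
      rw [LinearMap.mem_ker, map_sub, map_smul, residueSum_residueLift hdm]
      exact sub_eq_zero.2 (funext hz)
    obtain ⟨x, hx⟩ := hA ▸ hker
    refine ⟨Sum.elim x (residueLift m d z), ?_⟩
    rw [Matrix.fromCols_mulVec_sumElim, Matrix.smul_mulVec, Matrix.one_mulVec]
    exact eq_sub_iff_add_eq.1 hx

end CokerMaps

def diffShifts {G R : Type*} [AddCommGroup G] [DecidableEq G] [Ring R]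
    (W : Submodule R (G → R)) : AddSubgroup G where
  carrier := {g | ∀ j, Pi.single j 1 - Pi.single (j + g) 1 ∈ W}
  zero_mem' j := by simp
  add_mem' {g h} hg hh j := by
    simpa [← add_assoc] using W.add_mem (hg j) (hh (j + g))
  neg_mem' {g} hg j := by
    simpa [← sub_eq_add_neg] using W.neg_mem (hg (j - g))

section Cyclic

variable {m d : ℕ} [NeZero m]

theorem mem_zmultiples_of_mod_eq {i j : Fin m} (h : i.val % d = j.val % d) :
    j - i ∈ AddSubgroup.zmultiples (d : Fin m) := by
  obtain ⟨k, hk⟩ := (Nat.modEq_iff_dvd).1 h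
  refine AddSubgroup.mem_zmultiples_iff.2 ⟨k, ?_⟩
  calc k • (d : Fin m) = ((d * k : ℤ) : Fin m) := by push_cast; rw [zsmul_eq_mul, mul_comm]
    _ = j - i := by rw [← hk]; push_cast; simp

theorem natCast_gcd_mem_zmultiples (q : ℕ) :
    ((q.gcd m : ℕ) : Fin m) ∈ AddSubgroup.zmultiples (q : Fin m) := by
  refine AddSubgroup.mem_zmultiples_iff.2 ⟨q.gcdA m, ?_⟩
  have h := congrArg (Int.cast : ℤ → Fin m) (Nat.gcd_eq_gcd_ab q m)
  push_cast at h
  rw [h, zsmul_eq_mul]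
  simp [mul_comm]

theorem cycMat_mulVec (v : Fin m → ℤ) : cycMat m *ᵥ v = fun i => v (i - 1) := by
  ext i
  have key : ∀ j : Fin m, ((j : ℕ) + 1) % m = i ↔ j = i - 1 := fun j => by
    rw [eq_sub_iff_add_eq, Fin.ext_iff, Fin.val_add, Fin.val_one', Nat.add_mod_mod]
  simp [cycMat, Matrix.mulVec, dotProduct, key]

theorem cycMat_pow_mulVec (q : ℕ) (v : Fin m → ℤ) :
    cycMat m ^ q *ᵥ v = fun i => v (i - q) := by
  induction q generalizing v with
  | zero => simp
  | succ q ih =>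
    rw [pow_succ, ← Matrix.mulVec_mulVec, cycMat_mulVec, ih]
    ext i
    congr 1
    push_cast
    ring

theorem one_sub_cycMat_pow_mulVec_single (q : ℕ) (j : Fin m) :
    (1 - cycMat m ^ q) *ᵥ Pi.single j 1 = Pi.single j 1 - Pi.single (j + q) 1 := by
  rw [Matrix.sub_mulVec, Matrix.one_mulVec, cycMat_pow_mulVec]
  congr 1
  ext i
  simp [Pi.single_apply, sub_eq_iff_eq_add]

theorem val_add_natCast_mod_of_dvd {q : ℕ} (hdq : d ∣ q) (hdm : d ∣ m) (j : Fin m) :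
    (j + q : Fin m).val % d = j.val % d := by
  rw [Fin.val_add, Fin.val_natCast, Nat.mod_mod_of_dvd _ hdm, Nat.add_mod, Nat.mod_mod_of_dvd _ hdm,
    Nat.mod_eq_zero_of_dvd hdq, add_zero, Nat.mod_mod]

theorem range_one_sub_cycMat_pow_le {q : ℕ} (hdq : d ∣ q) (hdm : d ∣ m) :
    LinearMap.range (1 - cycMat m ^ q).mulVecLin ≤ LinearMap.ker (residueSum m d) := by
  have hd : 0 < d := Nat.pos_of_dvd_of_pos hdm (NeZero.pos m)
  rw [LinearMap.range_le_ker_iff]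
  refine (Pi.basisFun ℤ (Fin m)).ext fun j => ?_
  rw [LinearMap.comp_apply, Pi.basisFun_apply, Matrix.mulVecLin_apply,
    one_sub_cycMat_pow_mulVec_single, map_sub, residueSum_single hd, residueSum_single hd,
    LinearMap.zero_apply, sub_eq_zero]
  simp only [val_add_natCast_mod_of_dvd hdq hdm]

theorem range_one_sub_cycMat_pow (q : ℕ) :
    LinearMap.range (1 - cycMat m ^ q).mulVecLin = LinearMap.ker (residueSum m (q.gcd m)) := by
  have hd : 0 < q.gcd m := Nat.gcd_pos_of_pos_right q (NeZero.pos m)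
  have hdm : q.gcd m ≤ m := Nat.le_of_dvd (NeZero.pos m) (Nat.gcd_dvd_right q m)
  refine le_antisymm (range_one_sub_cycMat_pow_le (Nat.gcd_dvd_left q m) (Nat.gcd_dvd_right q m))
    fun v hv => ?_
  have hshift : AddSubgroup.zmultiples (q : Fin m) ≤
      diffShifts (LinearMap.range (1 - cycMat m ^ q).mulVecLin) :=
    AddSubgroup.zmultiples_le_of_mem fun j => ⟨Pi.single j 1, one_sub_cycMat_pow_mulVec_single q j⟩
  have hgcd : AddSubgroup.zmultiples ((q.gcd m : ℕ) : Fin m) ≤ AddSubgroup.zmultiples (q : Fin m) :=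
    AddSubgroup.zmultiples_le_of_mem (natCast_gcd_mem_zmultiples q)
  have hdiff := sub_residueLift_residueSum_mem hd hdm (fun i j hij => by
    simpa only [add_sub_cancel] using hshift (hgcd (mem_zmultiples_of_mod_eq hij)) i) v
  rwa [LinearMap.mem_ker.1 hv, map_zero, sub_zero] at hdiff

end Cyclic

theorem stmt_3 (m l : ℕ) (hm : 1 ≤ m) (hl : 1 ≤ l) (p : ℤ) (d : ℕ)
    (hd : d = Int.gcd p m) :
    Nonempty (coker ((l : ℤ) • (1 - cycMatZPow m p)) ≃+
      ((Fin d → ℤ) × (Fin (m - d) → ZMod l))) ∧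
    Nonempty (coker (Matrix.fromCols (1 - cycMatZPow m p)
      ((l : ℤ) • (1 : Matrix (Fin m) (Fin m) ℤ))) ≃+ (Fin d → ZMod l)) := by
  have : NeZero m := ⟨by omega⟩
  set q := (p % (m : ℤ)).toNat
  have hdq : d = q.gcd m := by
    rw [hd, ← Int.gcd_emod, ← Int.toNat_of_nonneg (Int.emod_nonneg p (by omega)),
      Int.gcd_natCast_natCast]
  have hdm : d ≤ m := hdq ▸ Nat.le_of_dvd hm (Nat.gcd_dvd_right q m)
  have hpow : cycMatZPow m p = cycMat m ^ q := rfl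
  have hrange : LinearMap.range (1 - cycMatZPow m p).mulVecLin =
      LinearMap.ker (residueSum m d) := by
    rw [hpow, hdq]
    exact range_one_sub_cycMat_pow q
  exact ⟨nonempty_coker_addEquiv_of_range_eq_ker _ (smulCokerMap_surjective l hdm)
      (range_smul_mulVecLin_eq_ker (by omega) hrange),
    nonempty_coker_addEquiv_of_range_eq_ker _ (fromColsCokerMap_surjective l hdm)
      (range_fromCols_mulVecLin_eq_ker hdm hrange)⟩
end

section
/- Let m ≥ 1 and p be integers, d = gcd(p, m) and q = m/d. Then Coker (1_m + X_m^p) ≅ (ℤ/2ℤ)^d if q is odd, and Coker (1_m + X_m^p) ≅ ℤ^d if q is even. -/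
open Matrix Polynomial

/-
Relabelling `Fin m` as `ℤ/m`, the matrix `1 + X^t` (`t = p mod m`) acts on `ℤ^(ℤ/m)` by
`v ↦ v + v(· - t)`. The orbits of `i ↦ i + t` are the `d = gcd(m, t)` cosets of `⟨t⟩`, each
traversed as `k ↦ c + k t` with `k ∈ ℤ/q`, `q = m/d`. In these coordinates the operator is `d`
copies of `v ↦ v + v(· - 1)` on `ℤ^(ℤ/q)`, whose cokernel the alternating sum `∑ (-1)^k v_k`
identifies with `ℤ/(1 - (-1)^q)`: that is `ℤ/2` for odd `q` and `ℤ` for even `q`.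
-/

namespace Submodule

variable {R M M' N N' : Type*} [Ring R] [AddCommGroup M] [Module R M] [AddCommGroup M']
  [Module R M'] [AddCommGroup N] [Module R N] [AddCommGroup N'] [Module R N']

def quotRangeEquivOfComm (e₁ : M ≃ₗ[R] N) (e₂ : M' ≃ₗ[R] N') {f : M →ₗ[R] M'}
    {g : N →ₗ[R] N'} (h : e₂.toLinearMap ∘ₗ f = g ∘ₗ e₁.toLinearMap) :
    (M' ⧸ LinearMap.range f) ≃ₗ[R] N' ⧸ LinearMap.range g :=
  Quotient.equiv _ _ e₂ <| by
    rw [← LinearMap.range_comp, h, LinearMap.range_comp_of_range_eq_top _ e₁.range]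

theorem _root_.LinearMap.range_piMap {ι : Type*} {φ ψ : ι → Type*} [∀ i, AddCommGroup (φ i)]
    [∀ i, Module R (φ i)] [∀ i, AddCommGroup (ψ i)] [∀ i, Module R (ψ i)]
    (f : ∀ i, φ i →ₗ[R] ψ i) :
    LinearMap.range (LinearMap.piMap f) = pi Set.univ fun i => LinearMap.range (f i) :=
  SetLike.coe_injective <| by
    simp only [LinearMap.coe_range, LinearMap.coe_piMap, coe_pi, Set.range_piMap]

end Submodule

section ShiftOp

variable (R : Type*) [Semiring R] {G : Type*} [AddGroup G]

def shiftOp (g : G) : (G → R) →ₗ[R] G → R :=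
  LinearMap.id + LinearMap.funLeft R R (· - g)

variable {R}

theorem shiftOp_apply (g : G) (v : G → R) (a : G) : shiftOp R g v a = v a + v (a - g) := rfl

theorem funLeft_comp_shiftOp {H : Type*} [AddGroup H] (e : G → H) {g : G} {h : H}
    (he : ∀ a, e (a - g) = e a - h) :
    LinearMap.funLeft R R e ∘ₗ shiftOp R h = shiftOp R g ∘ₗ LinearMap.funLeft R R e :=
  LinearMap.ext fun v => funext fun a => by
    simp only [LinearMap.comp_apply, LinearMap.funLeft_apply, shiftOp_apply, he]

end ShiftOp

theorem ZMod.natCast_eq_neg_one (r : ℕ) : (r : ZMod (r + 1)) = -1 :=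
  eq_neg_of_add_eq_zero_left <| by exact_mod_cast ZMod.natCast_self (r + 1)

section Cycle

variable {R : Type*} [CommRing R] (q : ℕ)

def altSum : (ZMod q → R) →ₗ[R] R :=
  ∑ k ∈ Finset.range q, (-1 : R) ^ k • LinearMap.proj (k : ZMod q)

variable {q}

theorem altSum_apply (v : ZMod q → R) :
    altSum q v = ∑ k ∈ Finset.range q, (-1) ^ k * v k := by
  simp [altSum]

theorem altSum_shiftOp_one [NeZero q] (w : ZMod q → R) :
    altSum q (shiftOp R 1 w) = (1 - (-1) ^ q) * w (-1) := by
  obtain ⟨r, rfl⟩ := Nat.exists_eq_succ_of_ne_zero (NeZero.ne q)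
  simp only [altSum_apply, shiftOp_apply, mul_add, Finset.sum_add_distrib]
  rw [Finset.sum_range_succ' (fun k => (-1) ^ k * w (k - 1)),
    Finset.sum_range_succ (fun k => (-1) ^ k * w k)]
  simp only [Nat.cast_succ, add_sub_cancel_right, Nat.cast_zero, zero_sub, pow_succ,
    ZMod.natCast_eq_neg_one, mul_neg_one, neg_mul, Finset.sum_neg_distrib]
  ring

theorem exists_shiftOp_one_eq [NeZero q] (v : ZMod q → R) (a : R)
    (h : altSum q v = (1 - (-1) ^ q) * a) : ∃ w, shiftOp R 1 w = v := by
  obtain ⟨r, rfl⟩ := Nat.exists_eq_succ_of_ne_zero (NeZero.ne q)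
  -- solve `W (j + 1) + W j = v (j + 1)` along `0, 1, …, r`; the constant term is chosen so
  -- that the wrap-around equation `W 0 + W r = v 0` holds as well
  set W : ℕ → R :=
    fun j => (-1) ^ j * (∑ i ∈ Finset.range (j + 1), (-1) ^ i * v i - (-1) ^ r * a)
  have hsign : ∀ i : ℕ, (-1 : R) ^ i * (-1) ^ i = 1 :=
    fun i => pow_mul_pow_eq_one i (by norm_num)
  have hstep : ∀ i, W (i + 1) + W i = v (i + 1 : ℕ) := fun i => by
    simp only [W, Finset.sum_range_succ _ (i + 1), pow_succ]
    linear_combination v (i + 1 : ℕ) * hsign i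
  have hclose : W 0 + W r = v 0 := by
    rw [altSum_apply] at h
    simp only [W, h, zero_add, Finset.sum_range_one, pow_zero, one_mul, Nat.cast_zero, pow_succ]
    ring
  refine ⟨fun k => W k.val, funext fun k => ?_⟩
  obtain ⟨j, hj, rfl⟩ : ∃ j < r + 1, (j : ZMod (r + 1)) = k :=
    ⟨k.val, ZMod.val_lt k, ZMod.natCast_zmod_val k⟩
  rw [shiftOp_apply]
  cases j with
  | zero =>
    rw [Nat.cast_zero, zero_sub, ← ZMod.natCast_eq_neg_one, ZMod.val_zero,
      ZMod.val_cast_of_lt (Nat.lt_succ_self r), hclose]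
  | succ i =>
    rw [Nat.cast_succ, add_sub_cancel_right, ← Nat.cast_succ, ZMod.val_cast_of_lt hj,
      ZMod.val_cast_of_lt (Nat.lt_of_succ_lt hj), hstep]

variable [NeZero q]

theorem mem_range_shiftOp_one_iff (v : ZMod q → R) :
    v ∈ LinearMap.range (shiftOp R 1) ↔ (1 - (-1) ^ q : R) ∣ altSum q v := by
  constructor
  · rintro ⟨w, rfl⟩
    exact ⟨w (-1), altSum_shiftOp_one w⟩
  · rintro ⟨a, ha⟩
    exact exists_shiftOp_one_eq v a ha

theorem altSum_surjective : Function.Surjective (altSum q : (ZMod q → R) →ₗ[R] R) := by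
  intro x
  refine ⟨Pi.single 0 x, ?_⟩
  rw [altSum_apply, Finset.sum_eq_single_of_mem 0 (Finset.mem_range.2 (NeZero.pos q))]
  · simp
  · intro k hk hk0
    have hk_ne : (k : ZMod q) ≠ 0 := by
      rw [Ne, ZMod.natCast_eq_zero_iff]
      exact fun hdvd => hk0 (Nat.eq_zero_of_dvd_of_lt hdvd (Finset.mem_range.1 hk))
    rw [Pi.single_eq_of_ne hk_ne, mul_zero]

variable (R q) in
noncomputable def cokerShiftOpOneEquiv :
    ((ZMod q → R) ⧸ LinearMap.range (shiftOp R (1 : ZMod q))) ≃ₗ[R]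
      R ⧸ Ideal.span {(1 - (-1) ^ q : R)} :=
  let ψ := (Ideal.span {(1 - (-1) ^ q : R)}).mkQ ∘ₗ altSum q
  have hker : LinearMap.range (shiftOp R (1 : ZMod q)) = LinearMap.ker ψ := by
    ext v
    rw [mem_range_shiftOp_one_iff, LinearMap.ker_comp, Submodule.ker_mkQ, Submodule.mem_comap,
      Ideal.mem_span_singleton]
  (Submodule.quotEquivOfEq _ _ hker).trans <|
    ψ.quotKerEquivOfSurjective <| (Submodule.mkQ_surjective _).comp altSum_surjective

end Cycle

section Orbits

variable {A : Type*} [AddCommGroup A]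

noncomputable def zmodMultiplesHom (a : A) : ZMod (addOrderOf a) →+ A :=
  ZMod.lift _ ⟨zmultiplesHom A a, by simp [addOrderOf_nsmul_eq_zero]⟩

theorem zmodMultiplesHom_intCast (a : A) (k : ℤ) : zmodMultiplesHom a k = k • a :=
  ZMod.lift_coe _ _ k

theorem zmodMultiplesHom_one (a : A) : zmodMultiplesHom a 1 = a := by
  simpa using zmodMultiplesHom_intCast a 1

theorem zmodMultiplesHom_injective (a : A) : Function.Injective (zmodMultiplesHom a) := by
  refine (injective_iff_map_eq_zero _).2 fun k hk => ?_
  rw [← ZMod.intCast_zmod_cast k, zmodMultiplesHom_intCast,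
    ← addOrderOf_dvd_iff_zsmul_eq_zero] at hk
  rw [← ZMod.intCast_zmod_cast k, ZMod.intCast_zmod_eq_zero_iff_dvd]
  exact hk

instance [Finite A] (a : A) : NeZero (addOrderOf a) := ⟨(addOrderOf_pos a).ne'⟩

variable {m : ℕ} (t : ℕ)

theorem orbitParam_injective :
    Function.Injective fun ck : Fin (m.gcd t) × ZMod (addOrderOf (t : ZMod m)) =>
      ((ck.1 : ℕ) : ZMod m) + zmodMultiplesHom _ ck.2 := by
  rintro ⟨c, k⟩ ⟨c', k'⟩ h
  let π := ZMod.castHom (Nat.gcd_dvd_left m t) (ZMod (m.gcd t))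
  have hπ : ∀ j, π (zmodMultiplesHom (t : ZMod m) j) = 0 := fun j => by
    rw [← ZMod.intCast_zmod_cast j, zmodMultiplesHom_intCast, map_zsmul, map_natCast,
      (ZMod.natCast_eq_zero_iff _ _).2 (Nat.gcd_dvd_right m t), smul_zero]
  have hc : c = c' := by
    have := congrArg π h
    simp only [map_add, hπ, add_zero, map_natCast] at this
    exact Fin.ext <| by
      simpa [Nat.mod_eq_of_lt c.isLt, Nat.mod_eq_of_lt c'.isLt] using congrArg ZMod.val this
  subst hc
  exact Prod.ext rfl (zmodMultiplesHom_injective _ (add_left_cancel h))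

noncomputable def orbitEquiv [NeZero m] :
    Fin (m.gcd t) × ZMod (addOrderOf (t : ZMod m)) ≃ ZMod m :=
  Equiv.ofBijective _ <| (Fintype.bijective_iff_injective_and_card _).2
    ⟨orbitParam_injective t, by
      rw [Fintype.card_prod, Fintype.card_fin, ZMod.card, ZMod.card, ZMod.addOrderOf_coe _
        (NeZero.ne m), Nat.mul_div_cancel' (Nat.gcd_dvd_left m t)]⟩

theorem orbitEquiv_apply_sub_one [NeZero m] (c : Fin (m.gcd t))
    (k : ZMod (addOrderOf (t : ZMod m))) :
    orbitEquiv t (c, k - 1) = orbitEquiv t (c, k) - t := by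
  simp only [orbitEquiv, Equiv.ofBijective_apply, map_sub, zmodMultiplesHom_one]
  ring

end Orbits

section CycMat

open Fin.CommRing

variable {m : ℕ} [NeZero m]

theorem cycMat_mulVec_apply (w : Fin m → ℤ) (i : Fin m) : (cycMat m *ᵥ w) i = w (i - 1) := by
  have hcond : ∀ j : Fin m, ((j : ℕ) + 1) % m = i ↔ j = i - 1 := fun j => by
    rw [eq_sub_iff_add_eq, Fin.ext_iff, Fin.val_add, Fin.val_one', Nat.add_mod_mod]
  simp only [mulVec, dotProduct, cycMat, of_apply, hcond, ite_mul, one_mul, zero_mul,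
    Finset.sum_ite_eq', Finset.mem_univ, if_true]

theorem cycMat_pow_mulVec_apply (t : ℕ) (w : Fin m → ℤ) (i : Fin m) :
    (cycMat m ^ t *ᵥ w) i = w (i - t) := by
  induction t generalizing w i with
  | zero => simp
  | succ t ih => rw [pow_succ, ← mulVec_mulVec, ih, cycMat_mulVec_apply, Nat.cast_succ, sub_sub]

theorem mulVecLin_one_add_cycMat_pow (t : ℕ) :
    (1 + cycMat m ^ t).mulVecLin = shiftOp ℤ (t : Fin m) := by
  refine LinearMap.ext fun w => funext fun i => ?_
  rw [mulVecLin_apply, add_mulVec, one_mulVec, Pi.add_apply, cycMat_pow_mulVec_apply,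
    shiftOp_apply]

end CycMat

open Fin.CommRing in
noncomputable def cokerOneAddCycMatPowEquiv (m t : ℕ) [NeZero m] :
    coker (1 + cycMat m ^ t) ≃ₗ[ℤ]
      Fin (m.gcd t) → ℤ ⧸ Ideal.span {(1 - (-1) ^ addOrderOf (t : ZMod m) : ℤ)} :=
  let toZMod : (Fin m → ℤ) ≃ₗ[ℤ] (ZMod m → ℤ) :=
    LinearEquiv.funCongrLeft ℤ ℤ (ZMod.finEquiv m).symm.toEquiv
  let toOrbits : (ZMod m → ℤ) ≃ₗ[ℤ] (Fin (m.gcd t) → ZMod (addOrderOf (t : ZMod m)) → ℤ) :=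
    (LinearEquiv.funCongrLeft ℤ ℤ (orbitEquiv t)).trans (LinearEquiv.curry ℤ ℤ _ _)
  (Submodule.quotRangeEquivOfComm toZMod toZMod (g := shiftOp ℤ (t : ZMod m)) <| by
      rw [mulVecLin_one_add_cycMat_pow]
      exact funLeft_comp_shiftOp _ fun a => by simp).trans <|
  (Submodule.quotRangeEquivOfComm toOrbits toOrbits
      (g := LinearMap.piMap fun _ => shiftOp ℤ 1) <|
    LinearMap.ext fun v => funext fun c => funext fun k => by
      simp [toOrbits, shiftOp_apply, orbitEquiv_apply_sub_one]).trans <|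
  (Submodule.quotEquivOfEq _ _ (LinearMap.range_piMap _)).trans <|
  (Submodule.quotientPi _).trans <|
  LinearEquiv.piCongrRight fun _ => cokerShiftOpOneEquiv ℤ _

theorem nonempty_coker_one_add_cycMat_pow_addEquiv (m t : ℕ) [NeZero m] (n : ℕ)
    (hn : (n : ℤ) = 1 - (-1) ^ (m / m.gcd t)) :
    Nonempty (coker (1 + cycMat m ^ t) ≃+ (Fin (m.gcd t) → ZMod n)) := by
  rw [← ZMod.addOrderOf_coe _ (NeZero.ne m)] at hn
  exact ⟨(cokerOneAddCycMatPowEquiv m t).toAddEquiv.trans <| AddEquiv.piCongrRight fun _ =>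
    ((Ideal.quotEquivOfEq (by rw [hn])).trans (Int.quotientSpanNatEquivZMod n)).toAddEquiv⟩

theorem stmt_4 (m : ℕ) (hm : 1 ≤ m) (p : ℤ) (d q : ℕ)
    (hd : d = Int.gcd p m) (hq : q = m / d) :
    (Odd q → Nonempty (coker (1 + cycMatZPow m p) ≃+ (Fin d → ZMod 2))) ∧
    (Even q → Nonempty (coker (1 + cycMatZPow m p) ≃+ (Fin d → ℤ))) := by
  have : NeZero m := ⟨by omega⟩
  set t := (p % (m : ℤ)).toNat
  have hdt : d = m.gcd t := by
    rw [hd, ← Int.gcd_emod, ← Int.toNat_of_nonneg (Int.emod_nonneg p (by omega)),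
      Int.gcd_natCast_natCast, Nat.gcd_comm]
  subst hdt hq
  exact ⟨fun hodd => nonempty_coker_one_add_cycMat_pow_addEquiv m t 2
      (by rw [hodd.neg_one_pow]; norm_num),
    fun heven => nonempty_coker_one_add_cycMat_pow_addEquiv m t 0
      (by rw [heven.neg_one_pow]; norm_num)⟩
end

section
/- Let m ≥ 1 be an even integer and f(x), g(x) ∈ ℤ[x]. Then Coker f(X_m) ≅ Coker f(−X_m), and Coker [f(X_m) g(X_m)] ≅ Coker [f(−X_m) g(−X_m)]. -/
open Matrix Polynomial

/-! For even `m`, the sign matrix `D = diag((-1)^i)` is an involution with `D X_m D = -X_m`: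
`X_m` only links indices `i ≡ j + 1 (mod m)`, which have opposite parity because `m` is even.
Hence `f(-X_m) = D f(X_m) D`, and multiplying a matrix on both sides by invertible matrices does not
change its cokernel; for `[f g]` the right-hand factor is `diag(D, D)`. -/

theorem Polynomial.aeval_mul_mul_invOf {R A : Type*} [CommSemiring R] [Ring A] [Algebra R A]
    (u a : A) [Invertible u] (p : R[X]) :
    aeval (u * a * ⅟u) p = u * aeval a p * ⅟u := by
  simpa [ConjAct.units_smul_def] using aeval_algHom_apply
    (MulSemiringAction.toAlgHom R A (ConjAct.toConjAct (unitOfInvertible u))) a p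

namespace Matrix

variable {R ι κ κ' : Type*} [CommRing R] [Fintype ι] [Fintype κ] [Fintype κ']

theorem fromCols_mul_mul (A : Matrix ι κ R) (B : Matrix ι κ' R) (U : Matrix ι ι R)
    (V : Matrix κ κ R) (W : Matrix κ' κ' R) :
    fromCols (U * A * V) (U * B * W) = U * fromCols A B * fromBlocks V 0 0 W := by
  simp [fromCols_mul_fromBlocks, Matrix.mul_assoc]

variable [DecidableEq ι] [DecidableEq κ]

theorem range_mulVecLin_mul_mul (A : Matrix ι κ R) (U : Matrix ι ι R) [Invertible U]
    (V : Matrix κ κ R) [Invertible V] :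
    LinearMap.range (U * A * V).mulVecLin
      = (LinearMap.range A.mulVecLin).map (U.toLinearEquiv' ‹_›).toLinearMap := by
  have hV : LinearMap.range V.mulVecLin = ⊤ :=
    LinearMap.range_eq_top.mpr fun v => ⟨⅟V *ᵥ v, by simp [mulVec_mulVec]⟩
  rw [mulVecLin_mul, mulVecLin_mul, LinearMap.range_comp_of_range_eq_top _ hV,
    LinearMap.range_comp]
  rfl

noncomputable def quotRangeMulMulEquiv (A : Matrix ι κ R) (U : Matrix ι ι R) [Invertible U]
    (V : Matrix κ κ R) [Invertible V] :
    ((ι → R) ⧸ LinearMap.range A.mulVecLin) ≃ₗ[R]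
      (ι → R) ⧸ LinearMap.range (U * A * V).mulVecLin :=
  Submodule.Quotient.equiv _ _ (U.toLinearEquiv' ‹_›) (range_mulVecLin_mul_mul A U V).symm

end Matrix

def signDiag (m : ℕ) : Matrix (Fin m) (Fin m) ℤ := diagonal fun i => (-1) ^ (i : ℕ)

theorem signDiag_mul_self (m : ℕ) : signDiag m * signDiag m = 1 := by
  rw [signDiag, diagonal_mul_diagonal, ← diagonal_one]
  congr 1 with i
  rw [← pow_add, Even.neg_one_pow ⟨i, rfl⟩]

instance (m : ℕ) : Invertible (signDiag m) :=
  ⟨signDiag m, signDiag_mul_self m, signDiag_mul_self m⟩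

theorem invOf_signDiag (m : ℕ) : ⅟(signDiag m) = signDiag m := rfl

theorem signDiag_mul_cycMat_mul_invOf {m : ℕ} (hm : Even m) :
    signDiag m * cycMat m * ⅟(signDiag m) = -cycMat m := by
  ext i j
  rw [invOf_signDiag]
  simp only [signDiag, mul_diagonal, diagonal_mul, cycMat, of_apply, neg_apply]
  split_ifs with h
  · have : Odd ((i : ℕ) + j) := by
      obtain ⟨k, rfl⟩ := hm
      rw [Nat.odd_iff, ← h, Nat.add_mod, Nat.mod_mod_of_dvd _ ⟨k, by omega⟩]; omega
    rw [mul_one, ← pow_add, this.neg_one_pow]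
  · simp

theorem stmt_5_general (m : ℕ) (hme : Even m) (f g : Polynomial ℤ) :
    Nonempty (coker (aeval (cycMat m) f) ≃+ coker (aeval (-(cycMat m)) f)) ∧
    Nonempty (coker (Matrix.fromCols (aeval (cycMat m) f) (aeval (cycMat m) g)) ≃+
      coker (Matrix.fromCols (aeval (-(cycMat m)) f) (aeval (-(cycMat m)) g))) := by
  let := fromBlocksZero₁₂Invertible (signDiag m) 0 (signDiag m)
  rw [← signDiag_mul_cycMat_mul_invOf hme, aeval_mul_mul_invOf, aeval_mul_mul_invOf,
    invOf_signDiag, fromCols_mul_mul]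
  exact ⟨⟨(quotRangeMulMulEquiv _ _ _).toAddEquiv⟩,
    ⟨(quotRangeMulMulEquiv _ _ _).toAddEquiv⟩⟩

theorem stmt_5 (m : ℕ) (hm : 1 ≤ m) (hme : Even m) (f g : Polynomial ℤ) :
    Nonempty (coker (aeval (cycMat m) f) ≃+ coker (aeval (-(cycMat m)) f)) ∧
    Nonempty (coker (Matrix.fromCols (aeval (cycMat m) f) (aeval (cycMat m) g)) ≃+
      coker (Matrix.fromCols (aeval (-(cycMat m)) f) (aeval (-(cycMat m)) g))) :=
  stmt_5_general m hme f g
end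

section
/- Let k ≥ 1 be an integer and put d = gcd(12, k). Then Coker [(1_{2k} − X_{2k})·(1_{2k} + X_{2k}^{3} + X_{2k}^{6} + X_{2k}^{9}) 1_{2k} + X_{2k}^{k−6}] ≅ ℤ^{d} if d ∈ {1, 3}; ≅ (ℤ/2ℤ)^{(3d+2)/2} if d ∈ {2, 6}; and ≅ ℤ^{d/2} if d ∈ {4, 12}. -/
/-!
Identify `ℤ^m` with `ℤ[x]/(x^m - 1)` through the power basis; `X_m` becomes multiplication by `x`,
so the cokernel is `ℤ[x]/(x^(2k) - 1, f, x^p + 1)` with `f = (1 - x)(1 + x³ + x⁶ + x⁹)` and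
`p ≡ k - 6 (mod 2k)`. In this ring `x^p = -1`; squaring and comparing with `x^(2k) = 1` gives
`x^12 = 1`, so `x^a` only depends on `a` modulo `gcd(12, 2k) = 2e`, `e = gcd(6, k)`.
If `p ≡ e (mod 2e)` then `x^e = -1`, and `x^e + 1` divides all three generators: the ideal is
`(x^e + 1)` and the cokernel is free of rank `e`. Otherwise `p ≡ 0 (mod 2e)`, so `x^p = 1` and
`2 = (1 - x^p) + (x^p + 1)` lies in the ideal, which is then `(2, x^4 - 1)` for `e = 2` and
`(2, f)` for `e = 6`: the cokernel is `(ℤ/2)^4`, resp. `(ℤ/2)^10`.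
-/

open Matrix Polynomial

namespace CycMat

variable (m : ℕ)

theorem monic_X_pow_sub_one (hm : m ≠ 0) : (X ^ m - 1 : ℤ[X]).Monic := by
  simpa using monic_X_pow_sub_C (1 : ℤ) hm

noncomputable def basis (hm : m ≠ 0) : Module.Basis (Fin m) ℤ (AdjoinRoot (X ^ m - 1 : ℤ[X])) :=
  (AdjoinRoot.powerBasis' (monic_X_pow_sub_one m hm)).basis.reindex
    (finCongr (by simpa using natDegree_X_pow_sub_C (n := m) (r := (1 : ℤ))))

theorem basis_apply (hm : m ≠ 0) (i : Fin m) :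
    basis m hm i = AdjoinRoot.root _ ^ (i : ℕ) := by
  simp [basis]

noncomputable def coords (hm : m ≠ 0) : AdjoinRoot (X ^ m - 1 : ℤ[X]) ≃ₗ[ℤ] (Fin m → ℤ) :=
  (basis m hm).equivFun

theorem coords_root_pow (hm : m ≠ 0) (i : Fin m) :
    coords m hm (AdjoinRoot.root _ ^ (i : ℕ)) = Pi.single i 1 := by
  ext j
  rw [coords, ← basis_apply m hm, Module.Basis.equivFun_self, Pi.single_apply]
  simp only [eq_comm]

theorem root_pow_eq_one : AdjoinRoot.root (X ^ m - 1 : ℤ[X]) ^ m = 1 := by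
  rw [← sub_eq_zero]
  have := AdjoinRoot.mk_self (f := (X ^ m - 1 : ℤ[X]))
  rwa [map_sub, map_pow, AdjoinRoot.mk_X, map_one] at this

theorem conjAlgEquiv_lmul_root (hm : m ≠ 0) :
    (coords m hm).conjAlgEquiv ℤ (Algebra.lmul ℤ _ (AdjoinRoot.root _)) =
      Matrix.toLinAlgEquiv' (cycMat m) := by
  ext i j
  have hi : AdjoinRoot.root (X ^ m - 1 : ℤ[X]) ^ ((i : ℕ) + 1) =
      AdjoinRoot.root _ ^ (((i : ℕ) + 1) % m : ℕ) := pow_eq_pow_mod _ (root_pow_eq_one m)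
  have hs := (LinearEquiv.symm_apply_eq _).mpr (coords_root_pow m hm i).symm
  simp only [LinearEquiv.conjAlgEquiv_apply, LinearMap.coe_comp, Function.comp_apply,
    LinearEquiv.coe_coe, LinearMap.single_apply, hs, Algebra.coe_lmul_eq_mul,
    LinearMap.mul_apply', ← pow_succ', hi, Matrix.toLinAlgEquiv'_apply, Matrix.mulVec_single_one]
  rw [coords_root_pow m hm ⟨_, Nat.mod_lt _ (Nat.pos_of_ne_zero hm)⟩, Pi.single_apply]
  simp [cycMat, Fin.ext_iff, eq_comm]

theorem coords_mk_mul (hm : m ≠ 0) (q : ℤ[X]) (z : AdjoinRoot (X ^ m - 1 : ℤ[X])) :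
    coords m hm (AdjoinRoot.mk _ q * z) = aeval (cycMat m) q *ᵥ coords m hm z := by
  have h : ((coords m hm).conjAlgEquiv ℤ).toAlgHom.comp
      ((Algebra.lmul ℤ _).comp (aeval (AdjoinRoot.root _))) =
      Matrix.toLinAlgEquiv'.toAlgHom.comp (aeval (cycMat m)) :=
    Polynomial.algHom_ext (by simpa using conjAlgEquiv_lmul_root m hm)
  simpa [AdjoinRoot.aeval_eq, LinearEquiv.conjAlgEquiv_apply] using
    DFunLike.congr_fun (DFunLike.congr_fun h q) (coords m hm z)

theorem map_coords_span_pair (hm : m ≠ 0) (f g : ℤ[X]) :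
    ((Ideal.span {AdjoinRoot.mk _ f, AdjoinRoot.mk _ g}).restrictScalars ℤ).map
        (coords m hm : AdjoinRoot (X ^ m - 1 : ℤ[X]) →ₗ[ℤ] (Fin m → ℤ)) =
      LinearMap.range (fromCols (aeval (cycMat m) f) (aeval (cycMat m) g)).mulVecLin := by
  ext x
  simp only [Submodule.mem_map, Submodule.restrictScalars_mem, Ideal.mem_span_pair,
    LinearMap.mem_range, mulVecLin_apply, LinearEquiv.coe_coe]
  constructor
  · rintro ⟨_, ⟨u, v, rfl⟩, rfl⟩
    refine ⟨Sum.elim (coords m hm u) (coords m hm v), ?_⟩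
    simp [mul_comm _ (AdjoinRoot.mk _ _), coords_mk_mul]
  · rintro ⟨w, rfl⟩
    refine ⟨_, ⟨(coords m hm).symm (w ∘ Sum.inl), (coords m hm).symm (w ∘ Sum.inr), rfl⟩, ?_⟩
    simp [fromCols_mulVec, mul_comm _ (AdjoinRoot.mk _ _), coords_mk_mul]

theorem nonempty_coker_addEquiv (hm : m ≠ 0) (f g : ℤ[X]) :
    Nonempty (coker (fromCols (aeval (cycMat m) f) (aeval (cycMat m) g)) ≃+
      ℤ[X] ⧸ Ideal.span {X ^ m - 1, f, g}) := by
  have hspan : Ideal.span {AdjoinRoot.mk (X ^ m - 1 : ℤ[X]) f, AdjoinRoot.mk _ g} =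
      (Ideal.span {f, g}).map (AdjoinRoot.mk _) := by
    rw [Ideal.map_span, Set.image_pair]
  have hsup : Ideal.span {X ^ m - 1} ⊔ Ideal.span {f, g} = Ideal.span {X ^ m - 1, f, g} :=
    (Ideal.span_insert _ _).symm
  exact ⟨(Submodule.Quotient.equiv _ _ _ (map_coords_span_pair m hm f g)).symm.toAddEquiv
    |>.trans (Submodule.Quotient.restrictScalarsEquiv ℤ _).toAddEquiv
    |>.trans (Ideal.quotEquivOfEq hspan).toAddEquiv
    |>.trans (DoubleQuot.quotQuotEquivQuotSup _ _).toAddEquiv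
    |>.trans (Ideal.quotEquivOfEq hsup).toAddEquiv⟩

end CycMat

theorem nonempty_adjoinRoot_linearEquiv {R : Type*} [CommRing R] {q : R[X]}
    (hq : q.Monic) {n : ℕ} (hn : q.natDegree = n) :
    Nonempty (AdjoinRoot q ≃ₗ[R] (Fin n → R)) := by
  subst hn
  exact ⟨(AdjoinRoot.powerBasis' hq).basis.equivFun⟩

theorem nonempty_quotient_span_natCast_addEquiv (ℓ : ℕ) [Fact (1 < ℓ)] {q : ℤ[X]}
    (hq : q.Monic) {n : ℕ} (hn : q.natDegree = n) :
    Nonempty (ℤ[X] ⧸ Ideal.span {(ℓ : ℤ[X]), q} ≃+ (Fin n → ZMod ℓ)) := by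
  let c := Int.castRingHom (ZMod ℓ)
  have hc : Function.Surjective (mapRingHom c) := map_surjective c ZMod.intCast_surjective
  have hker : RingHom.ker ((AdjoinRoot.mk (q.map c)).comp (mapRingHom c)) =
      Ideal.span {(ℓ : ℤ[X]), q} := by
    have hq' : Ideal.span {q.map c} = (Ideal.span {q}).map (mapRingHom c) := by
      rw [Ideal.map_span, Set.image_singleton, coe_mapRingHom]
    -- the kernel is `span {q} ⊔ ker (map c)`, and `ker (map c) = span {C ℓ}`
    rw [← RingHom.comap_ker, show RingHom.ker (AdjoinRoot.mk (q.map c)) = _ from Ideal.mk_ker, hq',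
      Ideal.comap_map_of_surjective _ hc, ← RingHom.ker_eq_comap_bot, ker_mapRingHom,
      ZMod.ker_intCastRingHom, Ideal.map_span, Set.image_singleton, Ideal.span_insert, sup_comm,
      map_natCast]
  obtain ⟨e⟩ := nonempty_adjoinRoot_linearEquiv (hq.map c) ((hq.natDegree_map c).trans hn)
  exact ⟨((Ideal.quotEquivOfEq hker.symm).trans
    (RingHom.quotientKerEquivOfSurjective (Ideal.Quotient.mk_surjective.comp hc))).toAddEquiv.trans
      e.toAddEquiv⟩

theorem pow_eq_pow_of_modEq_two_mul_gcd {S : Type*} [Ring S] {y : S} {k p a b : ℕ}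
    (hk : y ^ (2 * k) = 1) (hp : y ^ p = -1) (hpk : p + 6 ≡ k [MOD 2 * k])
    (hab : a ≡ b [MOD 2 * Nat.gcd 6 k]) : y ^ a = y ^ b := by
  have h12 : y ^ 12 = 1 := by
    have h2p : y ^ (2 * p) = 1 := by rw [mul_comm, pow_mul, hp, neg_one_sq]
    have hmod : 2 * p + 12 ≡ 2 * k [MOD 2 * k] := by simpa [mul_add] using hpk.mul_left 2
    calc y ^ 12 = y ^ (2 * p) * y ^ 12 := by rw [h2p, one_mul]
      _ = y ^ (2 * k) := by rw [← pow_add]; exact pow_eq_pow_of_modEq hmod hk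
      _ = 1 := hk
  refine pow_eq_pow_of_modEq ?_ (pow_gcd_eq_one.mpr ⟨h12, hk⟩)
  rwa [show (12 : ℕ) = 2 * 6 from rfl, Nat.gcd_mul_left]

section Ideals

variable {R : Type*} [CommRing R]

theorem X_pow_sub_X_pow_mem_span {f : R[X]} {k p a b : ℕ} (hpk : p + 6 ≡ k [MOD 2 * k])
    (hab : a ≡ b [MOD 2 * Nat.gcd 6 k]) :
    X ^ a - X ^ b ∈ Ideal.span {X ^ (2 * k) - 1, f, X ^ p + 1} := by
  set I := Ideal.span {X ^ (2 * k) - 1, f, X ^ p + 1}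
  rw [← Ideal.Quotient.eq, map_pow, map_pow]
  refine pow_eq_pow_of_modEq_two_mul_gcd ?_ ?_ hpk hab
  · rw [← map_pow, ← map_one (Ideal.Quotient.mk I), Ideal.Quotient.eq]
    exact Ideal.subset_span (by simp)
  · rw [← map_pow, ← map_one (Ideal.Quotient.mk I), ← map_neg, Ideal.Quotient.eq, sub_neg_eq_add]
    exact Ideal.subset_span (by simp)

theorem span_eq_span_X_pow_add_one {f : R[X]} {k p e : ℕ} (hpk : p + 6 ≡ k [MOD 2 * k])
    (he : e = Nat.gcd 6 k) (hpe : p ≡ e [MOD 2 * e]) (hf : X ^ e + 1 ∣ f) :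
    Ideal.span {X ^ (2 * k) - 1, f, X ^ p + 1} = Ideal.span {X ^ e + 1} := by
  apply le_antisymm
  · have hek : e ∣ k := he ▸ Nat.gcd_dvd_right 6 k
    have hodd : p = e * (2 * (p / (2 * e)) + 1) := by
      have he0 : 0 < e := he ▸ Nat.gcd_pos_of_pos_left _ (by norm_num)
      have hmod : p % (2 * e) = e := Eq.trans hpe (Nat.mod_eq_of_lt (by omega))
      linarith [Nat.div_add_mod p (2 * e)]
    rw [Ideal.span_le]
    simp only [Set.insert_subset_iff, Set.singleton_subset_iff, SetLike.mem_coe,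
      Ideal.mem_span_singleton]
    refine ⟨?_, hf, ?_⟩
    · exact dvd_trans ⟨X ^ e - 1, by ring⟩ (dvd_pow_sub_one_of_dvd (Nat.mul_dvd_mul_left 2 hek))
    · rw [hodd, pow_mul]
      simpa using Odd.add_dvd_pow_add_pow (X ^ e : R[X]) 1 (odd_two_mul_add_one _)
  · rw [Ideal.span_le, Set.singleton_subset_iff, SetLike.mem_coe,
      show (X ^ e + 1 : R[X]) = (X ^ e - X ^ p) + (X ^ p + 1) by ring]
    exact add_mem (X_pow_sub_X_pow_mem_span hpk (he ▸ hpe.symm)) (Ideal.subset_span (by simp))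

theorem span_eq_span_two {f q : R[X]} {k p e : ℕ} (hpk : p + 6 ≡ k [MOD 2 * k])
    (he : e = Nat.gcd 6 k) (hp : p ≡ 0 [MOD 2 * e]) (hqf : q ∣ f) (hq : q ∣ X ^ (2 * e) - 1)
    (hqI : q ∈ Ideal.span {X ^ (2 * e) - 1, f}) :
    Ideal.span {X ^ (2 * k) - 1, f, X ^ p + 1} = Ideal.span {2, q} := by
  apply le_antisymm
  · have hmem : ∀ x, q ∣ x → x ∈ Ideal.span {(2 : R[X]), q} := fun x hx =>
      Ideal.span_mono (by simp) (Ideal.mem_span_singleton.mpr hx)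
    have hek : 2 * e ∣ 2 * k := Nat.mul_dvd_mul_left 2 (he ▸ Nat.gcd_dvd_right 6 k)
    rw [Ideal.span_le]
    simp only [Set.insert_subset_iff, Set.singleton_subset_iff, SetLike.mem_coe]
    refine ⟨hmem _ (hq.trans (dvd_pow_sub_one_of_dvd hek)), hmem _ hqf, ?_⟩
    rw [show (X ^ p + 1 : R[X]) = (X ^ p - 1) + 2 by ring]
    exact add_mem (hmem _ (hq.trans (dvd_pow_sub_one_of_dvd (Nat.modEq_zero_iff_dvd.mp hp))))
      (Ideal.subset_span (by simp))
  · have hX : X ^ (2 * e) - 1 ∈ Ideal.span {X ^ (2 * k) - 1, f, X ^ p + 1} := by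
      simpa using X_pow_sub_X_pow_mem_span (f := f) hpk (a := 2 * e) (b := 0)
        (he ▸ Nat.modEq_zero_iff_dvd.mpr dvd_rfl)
    have h2 : (2 : R[X]) ∈ Ideal.span {X ^ (2 * k) - 1, f, X ^ p + 1} := by
      have := add_mem (X_pow_sub_X_pow_mem_span (f := f) hpk (he ▸ hp.symm))
        (Ideal.subset_span (s := {X ^ (2 * k) - 1, f, X ^ p + 1}) (by simp : X ^ p + 1 ∈ _))
      rwa [pow_zero, show (1 - X ^ p + (X ^ p + 1) : R[X]) = 2 by ring] at this
    rw [Ideal.span_le]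
    simp only [Set.insert_subset_iff, Set.singleton_subset_iff, SetLike.mem_coe]
    refine ⟨h2, Ideal.span_le.mpr ?_ hqI⟩
    simp only [Set.insert_subset_iff, Set.singleton_subset_iff, SetLike.mem_coe]
    exact ⟨hX, Ideal.subset_span (by simp)⟩

end Ideals

theorem nonempty_quotient_addEquiv_free {f : ℤ[X]} {k p e : ℕ} (hpk : p + 6 ≡ k [MOD 2 * k])
    (he : e = Nat.gcd 6 k) (hke : e + 6 ≡ k [MOD 2 * e]) (hf : X ^ e + 1 ∣ f) :
    Nonempty (ℤ[X] ⧸ Ideal.span {X ^ (2 * k) - 1, f, X ^ p + 1} ≃+ (Fin e → ℤ)) := by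
  have he0 : e ≠ 0 := he ▸ (Nat.gcd_pos_of_pos_left _ (by norm_num)).ne'
  have hpe : p ≡ e [MOD 2 * e] := Nat.ModEq.add_right_cancel' 6
    ((hpk.of_dvd (Nat.mul_dvd_mul_left 2 (he ▸ Nat.gcd_dvd_right 6 k))).trans hke.symm)
  obtain ⟨Q⟩ := nonempty_adjoinRoot_linearEquiv (by simpa using monic_X_pow_add_C (1 : ℤ) he0)
    (by simpa using natDegree_X_pow_add_C (n := e) (r := (1 : ℤ)))
  exact ⟨(Ideal.quotEquivOfEq (span_eq_span_X_pow_add_one hpk he hpe hf)).toAddEquiv.trans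
    Q.toAddEquiv⟩

theorem nonempty_quotient_addEquiv_zmod_two {f q : ℤ[X]} {k p e n : ℕ}
    (hpk : p + 6 ≡ k [MOD 2 * k]) (he : e = Nat.gcd 6 k) (hke : 6 ≡ k [MOD 2 * e])
    (hqm : q.Monic) (hn : q.natDegree = n) (hqf : q ∣ f) (hq : q ∣ X ^ (2 * e) - 1)
    (hqI : q ∈ Ideal.span {X ^ (2 * e) - 1, f}) :
    Nonempty (ℤ[X] ⧸ Ideal.span {X ^ (2 * k) - 1, f, X ^ p + 1} ≃+ (Fin n → ZMod 2)) := by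
  have hp : p ≡ 0 [MOD 2 * e] := Nat.ModEq.add_right_cancel' 6
    ((hpk.of_dvd (Nat.mul_dvd_mul_left 2 (he ▸ Nat.gcd_dvd_right 6 k))).trans hke.symm)
  have : Fact (1 < 2) := ⟨one_lt_two⟩
  obtain ⟨Q⟩ := nonempty_quotient_span_natCast_addEquiv 2 hqm hn
  rw [Nat.cast_ofNat] at Q
  exact ⟨(Ideal.quotEquivOfEq (span_eq_span_two hpk he hp hqf hq hqI)).toAddEquiv.trans Q⟩

theorem exists_cycMatZPow_eq_pow (m : ℕ) (hm : m ≠ 0) (z : ℤ) :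
    ∃ n : ℕ, (n : ℤ) ≡ z [ZMOD m] ∧ cycMatZPow m z = cycMat m ^ n := by
  refine ⟨(z % m).toNat, ?_, rfl⟩
  rw [Int.toNat_of_nonneg (Int.emod_nonneg z (by exact_mod_cast hm))]
  exact Int.mod_modEq z m

theorem exists_nonempty_coker_addEquiv (k : ℕ) (hk : k ≠ 0) :
    ∃ p : ℕ, p + 6 ≡ k [MOD 2 * k] ∧ Nonempty (coker (fromCols
        ((1 - cycMat (2 * k)) * (1 + cycMat (2 * k) ^ 3 + cycMat (2 * k) ^ 6 + cycMat (2 * k) ^ 9))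
        (1 + cycMatZPow (2 * k) ((k : ℤ) - 6))) ≃+
      ℤ[X] ⧸ Ideal.span
        {(X ^ (2 * k) - 1 : ℤ[X]), (1 - X) * (1 + X ^ 3 + X ^ 6 + X ^ 9), X ^ p + 1}) := by
  obtain ⟨p, hp, hpow⟩ := exists_cycMatZPow_eq_pow (2 * k) (by omega) (k - 6)
  refine ⟨p, Int.natCast_modEq_iff.mp ?_, ?_⟩
  · push_cast
    simpa using hp.add_right 6
  · have hA : (1 - cycMat (2 * k)) * (1 + cycMat (2 * k) ^ 3 + cycMat (2 * k) ^ 6 +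
        cycMat (2 * k) ^ 9) =
        aeval (cycMat (2 * k)) ((1 - X) * (1 + X ^ 3 + X ^ 6 + X ^ 9) : ℤ[X]) := by
      simp
    have hB : 1 + cycMat (2 * k) ^ p = aeval (cycMat (2 * k)) (X ^ p + 1 : ℤ[X]) := by
      simp [add_comm]
    rw [hpow, hA, hB]
    exact CycMat.nonempty_coker_addEquiv (2 * k) (by omega) _ _

theorem stmt_16 (k : ℕ) (hk : 1 ≤ k) (d : ℕ) (hd : d = Nat.gcd 12 k) :
    (d = 1 ∨ d = 3 → Nonempty (coker (Matrix.fromCols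
        ((1 - cycMat (2 * k)) * (1 + cycMat (2 * k) ^ 3 + cycMat (2 * k) ^ 6 + cycMat (2 * k) ^ 9))
        (1 + cycMatZPow (2 * k) ((k : ℤ) - 6))) ≃+ (Fin d → ℤ))) ∧
    (d = 2 ∨ d = 6 → Nonempty (coker (Matrix.fromCols
        ((1 - cycMat (2 * k)) * (1 + cycMat (2 * k) ^ 3 + cycMat (2 * k) ^ 6 + cycMat (2 * k) ^ 9))
        (1 + cycMatZPow (2 * k) ((k : ℤ) - 6))) ≃+ (Fin ((3 * d + 2) / 2) → ZMod 2))) ∧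
    (d = 4 ∨ d = 12 → Nonempty (coker (Matrix.fromCols
        ((1 - cycMat (2 * k)) * (1 + cycMat (2 * k) ^ 3 + cycMat (2 * k) ^ 6 + cycMat (2 * k) ^ 9))
        (1 + cycMatZPow (2 * k) ((k : ℤ) - 6))) ≃+ (Fin (d / 2) → ℤ))) := by
  obtain ⟨p, hpk, ⟨E⟩⟩ := exists_nonempty_coker_addEquiv k (by omega)
  have he : Nat.gcd 6 k = Nat.gcd 6 d := by rw [hd, ← Nat.gcd_assoc]; norm_num
  have hdk : d ∣ k := hd ▸ Nat.gcd_dvd_right 12 k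
  have hk2 : 2 ∣ k → 2 ∣ d := fun h => hd ▸ Nat.dvd_gcd (by norm_num) h
  have hk4 : 4 ∣ k → 4 ∣ d := fun h => hd ▸ Nat.dvd_gcd (by norm_num) h
  refine ⟨?_, ?_, ?_⟩ <;> rintro (rfl | rfl) <;> refine Nonempty.map E.trans ?_
  · exact nonempty_quotient_addEquiv_free hpk (by rw [he]; rfl)
      (by unfold Nat.ModEq; omega) ⟨(1 - X) * (1 - X + X ^ 2) * (1 + X ^ 6), by ring⟩
  · exact nonempty_quotient_addEquiv_free hpk (by rw [he]; rfl)
      (by unfold Nat.ModEq; omega) ⟨(1 - X) * (1 + X ^ 6), by ring⟩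
  · exact nonempty_quotient_addEquiv_zmod_two (e := 2) (n := 4) hpk (by rw [he]; rfl)
      (by unfold Nat.ModEq; omega)
      (by simpa using monic_X_pow_sub_C (1 : ℤ) (n := 4) (by norm_num))
      (by simpa using natDegree_X_pow_sub_C (n := 4) (r := (1 : ℤ)))
      ⟨-((1 - X + X ^ 2) * (1 - X ^ 2 + X ^ 4)), by ring⟩ dvd_rfl (Ideal.subset_span (by simp))
  · -- `f` has leading coefficient `-1`; its monic associate `-f` generates the same ideal
    exact nonempty_quotient_addEquiv_zmod_two (e := 6) (n := 10)
      (q := (X - 1) * (1 + X ^ 3 + X ^ 6 + X ^ 9)) hpk (by rw [he]; rfl)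
      (by unfold Nat.ModEq; omega) (by monicity!) (by compute_degree!) ⟨-1, by ring⟩
      ⟨1 + X + X ^ 2, by ring⟩ (neg_mem_iff.mp (Ideal.subset_span
        (Set.mem_insert_of_mem _ (Set.mem_singleton_iff.mpr (by ring)))))
  · exact nonempty_quotient_addEquiv_free (e := 2) hpk (by rw [he]; rfl)
      (by unfold Nat.ModEq; omega) ⟨(1 - X) * (1 + X ^ 3) * (1 - X ^ 2 + X ^ 4), by ring⟩
  · exact nonempty_quotient_addEquiv_free (e := 6) hpk (by rw [he]; rfl)
      (by unfold Nat.ModEq; omega) ⟨(1 - X) * (1 + X ^ 3), by ring⟩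
end

section
/- Let k ≥ 1 be an integer and put d = gcd(12, k). Then Coker [1_{2k} + X_{2k}^{6} 1_{2k} + X_{2k}^{k−6}] ≅ (ℤ/2ℤ)^{d} if d ∈ {1, 2, 3, 6} and ≅ ℤ^{d/2} if d ∈ {4, 12}; and Coker [1_{2k} + X_{2k}^{2} 1_{2k} + X_{2k}^{k−6}] ≅ ℤ/2ℤ if d ∈ {1, 3}, ≅ (ℤ/2ℤ)^{2} if d ∈ {2, 6}, and ≅ ℤ^{2} if d ∈ {4, 12}. -/
open Matrix Polynomial

/-!
The cokernel is generated by the classes `e x` of the standard basis vectors, indexed by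
`x : ℤ/n`, and the columns of `[1 + X^α  1 + X^β]` say exactly that `e (x + α) = -e x` and
`e (x + β) = -e x`. Hence `e` is periodic modulo the subgroup generated by `2α` and `β - α`;
for `n = 2k`, `α = a ∈ {2, 6}` and `β = k - 6` this subgroup is generated by `g = gcd(2a, k)`.

Suppose `e` is `c`-antiperiodic for some `c` with `2c ∣ n`. Then
`e x = (-1)^⌊x/c⌋ e (x mod c)`, so the quotient map factors through the folding map
`ℤ^n → ℤ^c`, `v ↦ ∑ₓ (-1)^⌊x/c⌋ vₓ · δ_{x mod c}`, whose kernel therefore lies in the column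
space. When `α ≡ β ≡ c (mod 2c)` (the case `g ∤ a`, `c = g/2`) the columns are killed by the
folding map, so the cokernel is `ℤ^c`. When `α ≡ β ≡ 0 (mod c)` (the case `g ∣ a`, `c = g`)
every `e x` has order two, and the same argument with the folding map reduced mod 2 gives
`(ℤ/2)^c`.
-/

namespace CyclicCoker

open scoped Fin.CommRing
open Function

lemma _root_.Function.Periodic.of_mem_closure {G M : Type*} [AddGroup G] {f : G → M}
    {S : Set G} (hS : ∀ s ∈ S, Periodic f s) {c : G} (hc : c ∈ AddSubgroup.closure S) :
    Periodic f c := by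
  induction hc using AddSubgroup.closure_induction with
  | mem s hs => exact hS s hs
  | zero => exact periodic_with_period_zero f
  | add s t _ _ hs ht => exact hs.add_period ht
  | neg s _ hs => exact hs.neg

lemma _root_.Function.Antiperiodic.of_sub_mem_zmultiples {G M : Type*} [AddGroup G]
    [InvolutiveNeg M] {f : G → M} {c α : G} (h : Antiperiodic f c)
    (hα : α - c ∈ AddSubgroup.zmultiples (2 • c)) : Antiperiodic f α := by
  obtain ⟨m, hm⟩ := hα
  simpa [hm] using (h.periodic.zsmul m).add_antiperiod h

lemma _root_.Function.Antiperiodic.apply_eq_neg_one_pow_smul {n : ℕ} [NeZero n] {M : Type*}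
    [AddCommGroup M] {f : Fin n → M} {c : ℕ} (h : Antiperiodic f (c : Fin n)) (x : Fin n) :
    f x = (-1 : ℤ) ^ ((x : ℕ) / c) • f ((x : ℕ) % c : ℕ) := by
  have hx : x = (((x : ℕ) % c : ℕ) : Fin n) + ((x : ℕ) / c) • (c : Fin n) := by
    rw [nsmul_eq_mul, ← Nat.cast_mul, ← Nat.cast_add, Nat.mod_add_div', Fin.cast_val_eq_self]
  conv_lhs => rw [hx]
  rw [h.add_nsmul_eq]

lemma neg_one_pow_mod_div (R : Type*) [Ring R] {n c : ℕ} (h : 2 * c ∣ n) (y : ℕ) :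
    (-1 : R) ^ (y % n / c) = (-1) ^ (y / c) := by
  obtain ⟨m, rfl⟩ := h
  rw [mul_comm 2 c, mul_assoc, Nat.mod_mul_right_div_self, neg_one_pow_eq_pow_mod_two,
    Nat.mod_mod_of_dvd _ (dvd_mul_right 2 m), ← neg_one_pow_eq_pow_mod_two]

lemma intCast_mem_zmultiples {R : Type*} [CommRing R] {a b : ℤ} (h : a ∣ b) :
    (b : R) ∈ AddSubgroup.zmultiples (a : R) := by
  obtain ⟨m, rfl⟩ := h
  exact ⟨m, by simp [mul_comm]⟩

lemma intCast_mem_closure_pair {R : Type*} [CommRing R] {x y z : ℤ} (u v : ℤ)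
    (h : u * x + v * y = z) : (z : R) ∈ AddSubgroup.closure {(x : R), (y : R)} :=
  AddSubgroup.mem_closure_pair.2 ⟨u, v, by simp [← h]⟩

lemma nonempty_coker_addEquiv_of_range_eq_ker {m ι M : Type} [Fintype m] [Fintype ι]
    [AddCommGroup M] (A : Matrix m ι ℤ) (φ : (m → ℤ) →ₗ[ℤ] M) (hφ : Surjective φ)
    (h : LinearMap.range A.mulVecLin = LinearMap.ker φ) : Nonempty (coker A ≃+ M) :=
  ⟨((Submodule.quotEquivOfEq _ _ h).trans (φ.quotKerEquivOfSurjective hφ)).toAddEquiv⟩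

section ShiftMatrices

variable {n : ℕ}

def shiftMat (s : Fin n) : Matrix (Fin n) (Fin n) ℤ :=
  Matrix.of fun i j => if j + s = i then 1 else 0

lemma shiftMat_mul (s t : Fin n) : shiftMat s * shiftMat t = shiftMat (s + t) := by
  ext i j
  simp [shiftMat, Matrix.mul_apply, add_assoc, add_comm t s]

variable [NeZero n]

lemma cycMat_eq_shiftMat_one : cycMat n = shiftMat 1 := by
  ext i j
  simp [cycMat, shiftMat, Fin.ext_iff, Fin.val_add]

lemma cycMat_pow_eq_shiftMat (t : ℕ) : cycMat n ^ t = shiftMat (t : Fin n) := by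
  induction t with
  | zero => ext i j; simp [shiftMat, Matrix.one_apply, eq_comm]
  | succ t ih => rw [pow_succ, ih, cycMat_eq_shiftMat_one, shiftMat_mul, Nat.cast_succ]

lemma cycMatZPow_eq_shiftMat (p : ℤ) : cycMatZPow n p = shiftMat (p : Fin n) := by
  have hp : 0 ≤ p % n := Int.emod_nonneg _ (by simp [NeZero.ne n])
  rw [cycMatZPow, cycMat_pow_eq_shiftMat, ← Int.cast_natCast, Int.toNat_of_nonneg hp,
    Int.emod_def]
  simp

end ShiftMatrices

section Fold

variable {n : ℕ} (R : Type*) [Ring R] (c : ℕ) [NeZero c]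

def foldVec (x : Fin n) : Fin c → R :=
  (-1 : R) ^ ((x : ℕ) / c) • Pi.single ((x : ℕ) : Fin c) 1

def fold : (Fin n → ℤ) →ₗ[ℤ] (Fin c → R) := Fintype.linearCombination ℤ (foldVec R c)

lemma fold_single (x : Fin n) (z : ℤ) : fold R c (Pi.single x z) = z • foldVec R c x :=
  Fintype.linearCombination_apply_single ..

lemma foldVec_apply_eq_intCast (x : Fin n) (r : Fin c) :
    foldVec R c x r = (foldVec ℤ c x r : R) := by
  simp [foldVec, Pi.single_apply]

lemma fold_apply_eq_intCast (v : Fin n → ℤ) (r : Fin c) :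
    fold R c v r = (fold ℤ c v r : R) := by
  simp [fold, Fintype.linearCombination_apply, foldVec_apply_eq_intCast R c]

variable [NeZero n]

lemma antiperiodic_foldVec (h : 2 * c ∣ n) : Antiperiodic (foldVec (n := n) R c) (c : Fin n) := by
  intro x
  have hcn : c ∣ n := dvd_trans (dvd_mul_left c 2) h
  have hval : ((x + (c : Fin n) : Fin n) : ℕ) = ((x : ℕ) + c) % n := by
    rw [Fin.val_add, Fin.val_natCast, Nat.add_mod_mod]
  have hres : ((((x : ℕ) + c) % n : ℕ) : Fin c) = (x : ℕ) := by
    ext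
    simp [Fin.val_natCast, Nat.mod_mod_of_dvd _ hcn]
  simp only [foldVec, hval, neg_one_pow_mod_div R h, Nat.add_div_right _ (NeZero.pos c), pow_succ,
    hres]
  simp

lemma foldVec_natCast_val (hcn : c ≤ n) (r : Fin c) :
    foldVec R c ((r : ℕ) : Fin n) = Pi.single r 1 := by
  have hr : (((r : ℕ) : Fin n) : ℕ) = r := Fin.val_cast_of_lt (by omega)
  simp [foldVec, hr, Nat.div_eq_of_lt r.isLt]

lemma fold_surjective (hcn : c ≤ n) (hR : Surjective (Int.cast : ℤ → R)) :
    Surjective (fold (n := n) R c) := by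
  intro w
  choose z hz using fun r => hR (w r)
  refine ⟨∑ r : Fin c, Pi.single ((r : ℕ) : Fin n) (z r), ?_⟩
  ext s
  simp [map_sum, fold_single, foldVec_natCast_val R c hcn, Pi.single_apply, hz]

end Fold

section Coker

variable {n : ℕ} (α β : Fin n)

abbrev shiftPairMat : Matrix (Fin n) (Fin n ⊕ Fin n) ℤ :=
  Matrix.fromCols (1 + shiftMat α) (1 + shiftMat β)

lemma range_shiftPairMat_le_iff (p : Submodule ℤ (Fin n → ℤ)) :
    LinearMap.range (shiftPairMat α β).mulVecLin ≤ p ↔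
      (∀ x, Pi.single x 1 + Pi.single (x + α) 1 ∈ p) ∧
        ∀ x, Pi.single x 1 + Pi.single (x + β) 1 ∈ p := by
  have hcol : ∀ γ x : Fin n, (1 + shiftMat γ).col x = Pi.single x 1 + Pi.single (x + γ) 1 := by
    intro γ x; ext i; simp [shiftMat, Matrix.one_apply, Pi.single_apply, eq_comm]
  rw [Matrix.range_mulVecLin, Submodule.span_le, Set.range_subset_iff, Sum.forall]
  simp only [← hcol]
  rfl

def basisVec (x : Fin n) : coker (shiftPairMat α β) := Submodule.Quotient.mk (Pi.single x 1)

lemma antiperiodic_basisVec_left : Antiperiodic (basisVec α β) α := by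
  intro x
  rw [eq_neg_iff_add_eq_zero, add_comm, basisVec, basisVec, ← Submodule.Quotient.mk_add,
    Submodule.Quotient.mk_eq_zero]
  exact ((range_shiftPairMat_le_iff α β _).1 le_rfl).1 x

lemma antiperiodic_basisVec_right : Antiperiodic (basisVec α β) β := by
  intro x
  rw [eq_neg_iff_add_eq_zero, add_comm, basisVec, basisVec, ← Submodule.Quotient.mk_add,
    Submodule.Quotient.mk_eq_zero]
  exact ((range_shiftPairMat_le_iff α β _).1 le_rfl).2 x

variable {α β}

lemma range_le_ker_fold (R : Type*) [Ring R] (c : ℕ) [NeZero c]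
    (hα : Antiperiodic (foldVec R c) α) (hβ : Antiperiodic (foldVec R c) β) :
    LinearMap.range (shiftPairMat α β).mulVecLin ≤ LinearMap.ker (fold R c) := by
  refine (range_shiftPairMat_le_iff α β _).2 ⟨fun x => ?_, fun x => ?_⟩ <;>
    simp only [LinearMap.mem_ker, map_add, fold_single, one_smul, hα x, hβ x, add_neg_cancel]

variable [NeZero n]

lemma periodic_basisVec {c : Fin n} (hc : c ∈ AddSubgroup.closure {2 • α, β - α}) :
    Periodic (basisVec α β) c := by
  refine Periodic.of_mem_closure ?_ hc
  rintro s (rfl | rfl)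
  exacts [(antiperiodic_basisVec_left α β).periodic,
    (antiperiodic_basisVec_right α β).sub (antiperiodic_basisVec_left α β)]

variable (c : ℕ) [NeZero c]

lemma mkQ_eq_comp_fold (h : Antiperiodic (basisVec α β) (c : Fin n)) :
    (LinearMap.range (shiftPairMat α β).mulVecLin).mkQ =
      Fintype.linearCombination ℤ (fun r : Fin c => basisVec α β (r : ℕ)) ∘ₗ fold ℤ c := by
  ext x
  simp only [LinearMap.coe_comp, Function.comp_apply, LinearMap.coe_single, fold_single,
    one_smul, foldVec, map_smul, Fintype.linearCombination_apply_single, Fin.val_natCast]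
  exact h.apply_eq_neg_one_pow_smul x

lemma ker_fold_int_le (h : Antiperiodic (basisVec α β) (c : Fin n)) :
    LinearMap.ker (fold ℤ c) ≤ LinearMap.range (shiftPairMat α β).mulVecLin := by
  intro v hv
  rw [← Submodule.Quotient.mk_eq_zero, ← Submodule.mkQ_apply, mkQ_eq_comp_fold c h,
    LinearMap.comp_apply, LinearMap.mem_ker.1 hv, map_zero]

lemma ker_fold_zmod_two_le (h : Antiperiodic (basisVec α β) (c : Fin n))
    (hα : Periodic (basisVec α β) α) :
    LinearMap.ker (fold (ZMod 2) c) ≤ LinearMap.range (shiftPairMat α β).mulVecLin := by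
  intro v hv
  have heven : ∀ r, ((2 : ℕ) : ℤ) ∣ fold ℤ c v r := fun r => by
    rw [← ZMod.intCast_zmod_eq_zero_iff_dvd, ← fold_apply_eq_intCast, LinearMap.mem_ker.1 hv]
    rfl
  choose w hw using heven
  have htwo : ∀ x, 2 • basisVec α β x = 0 := fun x => by
    have hneg : -basisVec α β x = basisVec α β x :=
      (antiperiodic_basisVec_left α β x).symm.trans (hα x)
    rw [two_nsmul]
    nth_rewrite 1 [← hneg]
    exact neg_add_cancel _
  rw [← Submodule.Quotient.mk_eq_zero, ← Submodule.mkQ_apply, mkQ_eq_comp_fold c h,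
    LinearMap.comp_apply, show fold ℤ c v = 2 • w from funext hw, map_nsmul,
    Fintype.linearCombination_apply, Finset.smul_sum]
  exact Finset.sum_eq_zero fun r _ => by rw [smul_comm, htwo, smul_zero]

theorem nonempty_coker_shiftPairMat_addEquiv_int (hcn : 2 * c ∣ n)
    (hα : α - c ∈ AddSubgroup.zmultiples (2 • (c : Fin n)))
    (hβ : β - c ∈ AddSubgroup.zmultiples (2 • (c : Fin n)))
    (hc : (c : Fin n) - α ∈ AddSubgroup.closure {2 • α, β - α}) :
    Nonempty (coker (shiftPairMat α β) ≃+ (Fin c → ℤ)) := by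
  have hfold := antiperiodic_foldVec ℤ c hcn
  have hbasis : Antiperiodic (basisVec α β) (c : Fin n) := by
    simpa using (periodic_basisVec hc).add_antiperiod (antiperiodic_basisVec_left α β)
  refine nonempty_coker_addEquiv_of_range_eq_ker _ (fold ℤ c)
    (fold_surjective ℤ c (Nat.le_of_dvd (NeZero.pos n) (dvd_of_mul_left_dvd hcn))
      fun z => ⟨z, Int.cast_id⟩) ?_
  exact le_antisymm (range_le_ker_fold ℤ c (hfold.of_sub_mem_zmultiples hα)
    (hfold.of_sub_mem_zmultiples hβ)) (ker_fold_int_le c hbasis)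

theorem nonempty_coker_shiftPairMat_addEquiv_zmod_two (hcn : 2 * c ∣ n)
    (hα : α ∈ AddSubgroup.zmultiples (c : Fin n))
    (hβ : β ∈ AddSubgroup.zmultiples (c : Fin n))
    (hc : (c : Fin n) ∈ AddSubgroup.closure {2 • α, β - α}) :
    Nonempty (coker (shiftPairMat α β) ≃+ (Fin c → ZMod 2)) := by
  have hfold : Periodic (foldVec (ZMod 2) c) (c : Fin n) := fun x => by
    rw [antiperiodic_foldVec (ZMod 2) c hcn x, CharTwo.neg_eq]
  have hfold_of_mem : ∀ γ ∈ AddSubgroup.zmultiples (c : Fin n),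
      Antiperiodic (foldVec (ZMod 2) c) γ := by
    rintro γ ⟨m, rfl⟩ x
    rw [CharTwo.neg_eq]
    exact hfold.zsmul m x
  have hperiodic := periodic_basisVec hc
  have hα' : Periodic (basisVec α β) α := by
    obtain ⟨m, rfl⟩ := hα
    exact hperiodic.zsmul m
  have hbasis : Antiperiodic (basisVec α β) (c : Fin n) := fun x => by
    rw [hperiodic x]
    exact ((antiperiodic_basisVec_left α β x).symm.trans (hα' x)).symm
  refine nonempty_coker_addEquiv_of_range_eq_ker _ (fold (ZMod 2) c)
    (fold_surjective _ c (Nat.le_of_dvd (NeZero.pos n) (dvd_of_mul_left_dvd hcn))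
      ZMod.intCast_surjective) ?_
  exact le_antisymm (range_le_ker_fold _ c (hfold_of_mem α hα) (hfold_of_mem β hβ))
    (ker_fold_zmod_two_le c hbasis hα')

end Coker

section Family

variable (k a : ℕ)

/- The hypothesis `2 * a ∣ a + 6` (that is, `a ∈ {2, 6}`) makes `k - 6 - a ≡ k (mod 2a)`,
so that `2a` and `k - 6 - a` generate the same subgroup of `ℤ/2k` as `gcd (2 * a) k`. -/
lemma intCast_mem_closure_of_gcd_dvd {R : Type*} [CommRing R] (ha : 2 * a ∣ a + 6) {z : ℤ}
    (hz : (Nat.gcd (2 * a) k : ℤ) ∣ z) :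
    (z : R) ∈ AddSubgroup.closure {((2 * a : ℤ) : R), ((k - 6 - a : ℤ) : R)} := by
  obtain ⟨m, hm⟩ := ha
  have hm' : (a : ℤ) + 6 = 2 * a * m := by exact_mod_cast hm
  obtain ⟨t, rfl⟩ := hz
  refine intCast_mem_closure_pair (t * (Nat.gcdA (2 * a) k + Nat.gcdB (2 * a) k * m))
    (t * Nat.gcdB (2 * a) k) ?_
  rw [Nat.gcd_eq_gcd_ab]
  push_cast
  linear_combination (-t * Nat.gcdB (2 * a) k) * hm'

variable [NeZero k]

lemma fromCols_eq_shiftPairMat :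
    Matrix.fromCols (1 + cycMat (2 * k) ^ a) (1 + cycMatZPow (2 * k) ((k : ℤ) - 6)) =
      shiftPairMat ((a : ℤ) : Fin (2 * k)) (((k : ℤ) - 6 : ℤ) : Fin (2 * k)) := by
  rw [cycMat_pow_eq_shiftMat, cycMatZPow_eq_shiftMat, Int.cast_natCast]

theorem nonempty_coker_addEquiv_zmod_two (ha : 2 * a ∣ a + 6) (hg : Nat.gcd (2 * a) k ∣ a) :
    Nonempty (coker (Matrix.fromCols (1 + cycMat (2 * k) ^ a)
      (1 + cycMatZPow (2 * k) ((k : ℤ) - 6))) ≃+ (Fin (Nat.gcd (2 * a) k) → ZMod 2)) := by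
  set g := Nat.gcd (2 * a) k
  have : NeZero g := ⟨(Nat.gcd_pos_of_pos_right _ (NeZero.pos k)).ne'⟩
  have hgk : (g : ℤ) ∣ k := Int.natCast_dvd_natCast.2 (Nat.gcd_dvd_right _ _)
  have hg6 : (g : ℤ) ∣ 6 := by
    exact_mod_cast (Nat.dvd_add_right hg).1 (dvd_trans (Nat.gcd_dvd_left _ _) ha)
  rw [fromCols_eq_shiftPairMat]
  refine nonempty_coker_shiftPairMat_addEquiv_zmod_two g
    (mul_dvd_mul_left 2 (Nat.gcd_dvd_right _ _)) ?_ ?_ ?_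
  · simpa using intCast_mem_zmultiples (R := Fin (2 * k)) (Int.natCast_dvd_natCast.2 hg)
  · simpa using intCast_mem_zmultiples (R := Fin (2 * k)) (dvd_sub hgk hg6)
  · simpa using intCast_mem_closure_of_gcd_dvd k a (R := Fin (2 * k)) ha (dvd_refl (g : ℤ))

theorem nonempty_coker_addEquiv_int (ha : 2 * a ∣ a + 6) (hg : ¬ Nat.gcd (2 * a) k ∣ a) :
    Nonempty (coker (Matrix.fromCols (1 + cycMat (2 * k) ^ a)
      (1 + cycMatZPow (2 * k) ((k : ℤ) - 6))) ≃+ (Fin (Nat.gcd (2 * a) k / 2) → ℤ)) := by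
  set g := Nat.gcd (2 * a) k
  have hg2a : g ∣ 2 * a := Nat.gcd_dvd_left _ _
  have hgk : g ∣ k := Nat.gcd_dvd_right _ _
  obtain ⟨c, hc⟩ : 2 ∣ g := by
    by_contra h2
    exact hg (((Nat.prime_two.coprime_iff_not_dvd).2 h2).symm.dvd_of_dvd_mul_left hg2a)
  have : NeZero c := ⟨by rintro rfl; simp [g, NeZero.ne k] at hc⟩
  obtain ⟨q, hq⟩ : c ∣ a := Nat.dvd_of_mul_dvd_mul_left two_pos (hc ▸ hg2a)
  obtain ⟨r, hr⟩ : Odd q :=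
    Nat.not_even_iff_odd.1 fun ⟨r, hr⟩ => hg ⟨r, by rw [hq, hc, hr]; ring⟩
  have hac : (g : ℤ) ∣ a - c := ⟨r, by rw [hq, hr, hc]; push_cast; ring⟩
  have hkc : (g : ℤ) ∣ k - 6 - c := by
    have h6 := dvd_add (dvd_sub (Int.natCast_dvd_natCast.2 hgk)
      (by exact_mod_cast dvd_trans hg2a ha : (g : ℤ) ∣ a + 6)) hac
    rwa [show (k : ℤ) - (a + 6) + (a - c) = k - 6 - c by ring] at h6
  rw [fromCols_eq_shiftPairMat, show g / 2 = c by omega]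
  refine nonempty_coker_shiftPairMat_addEquiv_int c (hc ▸ dvd_mul_of_dvd_right hgk 2) ?_ ?_ ?_
  · simpa [hc] using intCast_mem_zmultiples (R := Fin (2 * k)) hac
  · simpa [hc] using intCast_mem_zmultiples (R := Fin (2 * k)) hkc
  · simpa using intCast_mem_closure_of_gcd_dvd k a (R := Fin (2 * k)) ha (dvd_neg.2 hac)

end Family

end CyclicCoker

open CyclicCoker in
theorem stmt_17 (k : ℕ) (hk : 1 ≤ k) (d : ℕ) (hd : d = Nat.gcd 12 k) :
    (d = 1 ∨ d = 2 ∨ d = 3 ∨ d = 6 → Nonempty (coker (Matrix.fromCols (1 + cycMat (2 * k) ^ 6)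
        (1 + cycMatZPow (2 * k) ((k : ℤ) - 6))) ≃+ (Fin d → ZMod 2))) ∧
    (d = 4 ∨ d = 12 → Nonempty (coker (Matrix.fromCols (1 + cycMat (2 * k) ^ 6)
        (1 + cycMatZPow (2 * k) ((k : ℤ) - 6))) ≃+ (Fin (d / 2) → ℤ))) ∧
    (d = 1 ∨ d = 3 → Nonempty (coker (Matrix.fromCols (1 + cycMat (2 * k) ^ 2)
        (1 + cycMatZPow (2 * k) ((k : ℤ) - 6))) ≃+ ZMod 2)) ∧
    (d = 2 ∨ d = 6 → Nonempty (coker (Matrix.fromCols (1 + cycMat (2 * k) ^ 2)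
        (1 + cycMatZPow (2 * k) ((k : ℤ) - 6))) ≃+ (Fin 2 → ZMod 2))) ∧
    (d = 4 ∨ d = 12 → Nonempty (coker (Matrix.fromCols (1 + cycMat (2 * k) ^ 2)
        (1 + cycMatZPow (2 * k) ((k : ℤ) - 6))) ≃+ (Fin 2 → ℤ))) := by
  have : NeZero k := ⟨by omega⟩
  have h12 : Nat.gcd (2 * 6) k = d := hd.symm
  have h4 : Nat.gcd (2 * 2) k = Nat.gcd 4 d := by rw [hd, ← Nat.gcd_assoc]; norm_num
  refine ⟨fun h => ?_, fun h => ?_, fun h => ?_, fun h => ?_, fun h => ?_⟩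
  · rw [← h12]
    exact nonempty_coker_addEquiv_zmod_two k 6 (by norm_num)
      (by rw [h12]; rcases h with rfl | rfl | rfl | rfl <;> norm_num)
  · rw [← h12]
    exact nonempty_coker_addEquiv_int k 6 (by norm_num)
      (by rw [h12]; rcases h with rfl | rfl <;> norm_num)
  · have hg : Nat.gcd (2 * 2) k = 1 := by rw [h4]; rcases h with rfl | rfl <;> rfl
    obtain ⟨e⟩ :=
      nonempty_coker_addEquiv_zmod_two k 2 (by norm_num) (by rw [hg]; exact one_dvd _)
    rw [hg] at e
    exact ⟨e.trans (AddEquiv.piUnique _)⟩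
  · have hg : Nat.gcd (2 * 2) k = 2 := by rw [h4]; rcases h with rfl | rfl <;> rfl
    obtain ⟨e⟩ := nonempty_coker_addEquiv_zmod_two k 2 (by norm_num) (by rw [hg])
    rw [hg] at e
    exact ⟨e⟩
  · have hg : Nat.gcd (2 * 2) k = 4 := by rw [h4]; rcases h with rfl | rfl <;> rfl
    obtain ⟨e⟩ := nonempty_coker_addEquiv_int k 2 (by norm_num) (by rw [hg]; norm_num)
    rw [hg] at e
    exact ⟨e⟩
end

section
/- Let k ≥ 1 be an integer and put d = gcd(30, k). Then Coker ((1_k − X_k + X_k^{2})·(1_k + X_k^{5})) ≅ (ℤ/2ℤ)^{d} if d ∈ {1, 3, 5}; ≅ (ℤ/2ℤ)^{7} if d = 15; ≅ ℤ^{d/2} if d ∈ {2, 6, 10}; and ≅ ℤ^{7} if d = 30. -/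
open Matrix Polynomial

/-!
In the power basis `1, x, …, x^(k-1)` of `ℤ[X]/(X^k - 1)` the matrix `X_k` is multiplication by
`x`, so the cokernel of `p(X_k)` is `ℤ[X]/(X^k - 1, p)`. For `p = (1 - X + X²)(1 + X⁵)`, a divisor
of `X^30 - 1`, Euclid's algorithm on the exponents replaces `X^k - 1` by `X^d - 1`,
`d = gcd(30, k)`. For each of the eight values of `d` the ideal `(X^d - 1, p)` has a simpler
generating set, `(X^d - 1, 2)`, `(p, 2)`, `(X^(d/2) + 1)` or `(p)`, and the quotient of `ℤ[X]` by a
monic polynomial of degree `n` (together with `2`) is `ℤ^n` (resp. `(ℤ/2ℤ)^n`).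
-/

namespace Ideal

variable {R : Type*} [CommRing R]

theorem span_pair_eq_span_pair_of_mem {a b c : R} (hb : b ∈ span {a, c}) (hc : c ∈ span {a, b}) :
    span {a, b} = span {a, c} := by
  apply le_antisymm <;> rw [span_le, Set.insert_subset_iff, Set.singleton_subset_iff]
  · exact ⟨subset_span (Set.mem_insert a _), hb⟩
  · exact ⟨subset_span (Set.mem_insert a _), hc⟩

theorem span_pair_eq_span_singleton_of_dvd {a b c : R} (ha : c ∣ a) (hb : c ∣ b)
    (hc : c ∈ span {a, b}) : span {a, b} = span {c} := by
  apply le_antisymm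
  · rw [span_le, Set.insert_subset_iff, Set.singleton_subset_iff]
    exact ⟨mem_span_singleton.mpr ha, mem_span_singleton.mpr hb⟩
  · rwa [span_singleton_le_iff_mem]

theorem span_pow_sub_one_pair (x : R) (m n : ℕ) :
    span {x ^ m - 1, x ^ n - 1} = span {x ^ Nat.gcd m n - 1} := by
  induction m, n using Nat.gcd.induction with
  | H0 n => simp
  | H1 m n _ ih =>
    obtain ⟨c, hc⟩ : x ^ m - 1 ∣ x ^ (m * (n / m)) - 1 := by
      simpa [pow_mul] using sub_dvd_pow_sub_pow (x ^ m) 1 (n / m)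
    have hn : x ^ n - 1 = x ^ (n % m) - 1 + x ^ (n % m) * c * (x ^ m - 1) := by
      conv_lhs => rw [← Nat.mod_add_div n m]
      linear_combination x ^ (n % m) * hc
    rw [hn, span_pair_add_mul_left, span_pair_comm, ih, ← Nat.gcd_rec]

theorem span_pow_sub_one_pair_eq_gcd {x p : R} {n : ℕ} (hp : p ∣ x ^ n - 1) (k : ℕ) :
    span {x ^ k - 1, p} = span {x ^ Nat.gcd n k - 1, p} := by
  have hle : span {x ^ n - 1} ≤ span {p} := span_singleton_le_span_singleton.mpr hp
  rw [span_insert, span_insert, Nat.gcd_comm, ← span_pow_sub_one_pair, span_insert, sup_assoc,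
    sup_eq_right.mpr hle]

end Ideal

section LeftMulMatrix

variable {R S ι : Type*} [CommRing R] [CommRing S] [Algebra R S] [Fintype ι] [DecidableEq ι]

theorem Algebra.range_mulVecLin_leftMulMatrix (b : Module.Basis ι R S) (x : S) :
    LinearMap.range (Algebra.leftMulMatrix b x).mulVecLin =
      ((Ideal.span {x}).restrictScalars R).map (b.equivFun : S →ₗ[R] ι → R) := by
  ext v
  simp only [Submodule.mem_map, Submodule.restrictScalars_mem, Ideal.mem_span_singleton',
    LinearMap.mem_range, Matrix.mulVecLin_apply, LinearEquiv.coe_coe,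
    Module.Basis.equivFun_apply]
  constructor
  · rintro ⟨w, rfl⟩
    refine ⟨b.equivFun.symm w * x, ⟨_, rfl⟩, ?_⟩
    rw [mul_comm, ← leftMulMatrix_mulVec_repr, ← Module.Basis.equivFun_apply,
      LinearEquiv.apply_symm_apply]
  · rintro ⟨_, ⟨y, rfl⟩, rfl⟩
    exact ⟨b.repr y, by rw [leftMulMatrix_mulVec_repr, mul_comm]⟩

noncomputable def Algebra.cokerLeftMulMatrixEquiv (b : Module.Basis ι R S) (x : S) :
    ((ι → R) ⧸ LinearMap.range (Algebra.leftMulMatrix b x).mulVecLin) ≃ₗ[R]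
      S ⧸ Ideal.span {x} :=
  (Submodule.Quotient.equiv _ _ b.equivFun (range_mulVecLin_leftMulMatrix b x).symm).symm.trans
    (Submodule.Quotient.restrictScalarsEquiv R _)

end LeftMulMatrix

noncomputable def AdjoinRoot.quotSpanMkEquiv {R : Type*} [CommRing R] (g p : R[X]) :
    AdjoinRoot g ⧸ Ideal.span {mk g p} ≃+* R[X] ⧸ Ideal.span {g, p} :=
  (Ideal.quotEquivOfEq (I := Ideal.span {Ideal.Quotient.mk (Ideal.span {g}) p})
      (J := (Ideal.span {p}).map (Ideal.Quotient.mk (Ideal.span {g})))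
      (by rw [Ideal.map_span, Set.image_singleton])).trans
    ((DoubleQuot.quotQuotEquivQuotSup _ _).trans (Ideal.quotEquivOfEq (Ideal.span_insert g {p}).symm))

theorem Polynomial.monic_X_pow_sub_one {R : Type*} [Ring R] {n : ℕ} (hn : n ≠ 0) :
    (X ^ n - 1 : R[X]).Monic := by
  simpa using monic_X_pow_sub_C (1 : R) hn

theorem Polynomial.natDegree_X_pow_sub_one {R : Type*} [Ring R] [Nontrivial R] (n : ℕ) :
    (X ^ n - 1 : R[X]).natDegree = n := by
  simpa using natDegree_X_pow_sub_C (n := n) (r := (1 : R))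

noncomputable def cycBasis {k : ℕ} (hk : k ≠ 0) :
    Module.Basis (Fin k) ℤ (AdjoinRoot (X ^ k - 1 : ℤ[X])) :=
  (AdjoinRoot.powerBasis' (monic_X_pow_sub_one hk)).basis.reindex
    (finCongr (natDegree_X_pow_sub_one k))

theorem cycBasis_apply {k : ℕ} (hk : k ≠ 0) (i : Fin k) :
    cycBasis hk i = AdjoinRoot.root _ ^ (i : ℕ) := by
  rw [cycBasis, Module.Basis.reindex_apply, PowerBasis.basis_eq_pow]
  rfl

theorem leftMulMatrix_cycBasis_root {k : ℕ} (hk : k ≠ 0) :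
    Algebra.leftMulMatrix (cycBasis hk) (AdjoinRoot.root _) = cycMat k := by
  have hroot : AdjoinRoot.root (X ^ k - 1 : ℤ[X]) ^ k = 1 := by
    have h := AdjoinRoot.eval₂_root (X ^ k - 1 : ℤ[X])
    rwa [eval₂_sub, eval₂_X_pow, eval₂_one, sub_eq_zero] at h
  ext i j
  have hmul : AdjoinRoot.root _ * cycBasis hk j =
      cycBasis hk ⟨((j : ℕ) + 1) % k, Nat.mod_lt _ (Nat.pos_of_ne_zero hk)⟩ := by
    rw [cycBasis_apply, cycBasis_apply, ← pow_succ', ← pow_eq_pow_mod _ hroot]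
  rw [Algebra.leftMulMatrix_eq_repr_mul, hmul, Module.Basis.repr_self, Finsupp.single_apply]
  simp [cycMat, Fin.ext_iff]

noncomputable def cokerAevalCycMatEquiv {k : ℕ} (hk : k ≠ 0) (p : ℤ[X]) :
    coker (aeval (cycMat k) p) ≃+ ℤ[X] ⧸ Ideal.span {X ^ k - 1, p} :=
  ((Submodule.quotEquivOfEq _ _ (by
      rw [← leftMulMatrix_cycBasis_root hk, aeval_algHom_apply, AdjoinRoot.aeval_eq])).trans
    (Algebra.cokerLeftMulMatrixEquiv _ _)).toAddEquiv.trans (AdjoinRoot.quotSpanMkEquiv _ _).toAddEquiv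

noncomputable def Polynomial.Monic.quotientSpanEquivPi {R : Type*} [CommRing R] {w : R[X]}
    (hw : w.Monic) {n : ℕ} (hn : w.natDegree = n) : (R[X] ⧸ Ideal.span {w}) ≃ₗ[R] (Fin n → R) :=
  ((AdjoinRoot.powerBasis' hw).basis.reindex (finCongr hn)).equivFun

theorem ker_mapRingHom_intCast (q : ℕ) :
    RingHom.ker (mapRingHom (Int.castRingHom (ZMod q))) = Ideal.span {(q : ℤ[X])} := by
  rw [ker_mapRingHom, ZMod.ker_intCastRingHom, Ideal.map_span, Set.image_singleton,
    C_eq_natCast]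

noncomputable def quotientSpanNatCastEquiv (w : ℤ[X]) (q : ℕ) :
    ℤ[X] ⧸ Ideal.span {w, (q : ℤ[X])} ≃+*
      (ZMod q)[X] ⧸ Ideal.span {w.map (Int.castRingHom (ZMod q))} :=
  let φ := mapRingHom (Int.castRingHom (ZMod q))
  have hφ : Function.Surjective φ := map_surjective _ ZMod.intCast_surjective
  have hspan : Ideal.span {w.map (Int.castRingHom (ZMod q))} = (Ideal.span {w}).map φ := by
    rw [Ideal.map_span, Set.image_singleton, coe_mapRingHom]
  (Ideal.quotEquivOfEq (J := RingHom.ker ((Ideal.Quotient.mk _).comp φ)) (by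
      rw [← RingHom.comap_ker, Ideal.mk_ker, hspan, Ideal.comap_map_of_surjective' _ hφ,
        ker_mapRingHom_intCast, Ideal.span_insert])).trans
    (RingHom.quotientKerEquivOfSurjective (Ideal.Quotient.mk_surjective.comp hφ))

noncomputable def quotientSpanNatCastEquivPi {w : ℤ[X]} (hw : w.Monic) {n : ℕ}
    (hn : w.natDegree = n) (q : ℕ) [Fact (1 < q)] :
    ℤ[X] ⧸ Ideal.span {w, (q : ℤ[X])} ≃+ (Fin n → ZMod q) :=
  (quotientSpanNatCastEquiv w q).toAddEquiv.trans
    ((hw.map _).quotientSpanEquivPi ((hw.natDegree_map _).trans hn)).toAddEquiv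

noncomputable def fPoly : ℤ[X] := (1 - X + X ^ 2) * (1 + X ^ 5)

theorem aeval_fPoly {n : Type*} [Fintype n] [DecidableEq n] (A : Matrix n n ℤ) :
    aeval A fPoly = (1 - A + A ^ 2) * (1 + A ^ 5) := by
  simp [fPoly]

theorem fPoly_monic : fPoly.Monic := by
  unfold fPoly; monicity!

theorem fPoly_natDegree : fPoly.natDegree = 7 := by
  unfold fPoly; compute_degree!

theorem fPoly_dvd_X_pow_sub_one : fPoly ∣ X ^ 30 - 1 :=
  ⟨-1 - X + X ^ 3 + X ^ 4 + X ^ 5 - X ^ 7 - X ^ 8 + X ^ 15 + X ^ 16 - X ^ 18 - X ^ 19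
      - X ^ 20 + X ^ 22 + X ^ 23, by unfold fPoly; ring⟩

section

open Ideal

theorem span_X_pow_sub_one_fPoly_of_odd {d : ℕ} (hd : d = 1 ∨ d = 3 ∨ d = 5) :
    span {X ^ d - 1, fPoly} = span {X ^ d - 1, 2} := by
  unfold fPoly
  rcases hd with rfl | rfl | rfl
  · exact span_pair_eq_span_pair_of_mem
      (mem_span_pair.mpr ⟨1 + 2 * X + X ^ 2 + X ^ 3 + X ^ 4 + X ^ 6, 1, by ring⟩)
      (mem_span_pair.mpr ⟨-1 - 2 * X - X ^ 2 - X ^ 3 - X ^ 4 - X ^ 6, 1, by ring⟩)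
  · exact span_pair_eq_span_pair_of_mem
      (mem_span_pair.mpr ⟨-1 + X + X ^ 2 - X ^ 3 + X ^ 4, X ^ 2, by ring⟩)
      (mem_span_pair.mpr ⟨-2 + X - X ^ 2 - X ^ 3 + X ^ 4 - X ^ 5, X, by ring⟩)
  · exact span_pair_eq_span_pair_of_mem
      (mem_span_pair.mpr ⟨1 - X + X ^ 2, 1 - X + X ^ 2, by ring⟩)
      (mem_span_pair.mpr ⟨-2 + X - X ^ 5 + X ^ 6, X + X ^ 2 - X ^ 4, by ring⟩)

theorem span_X_pow_sub_one_fPoly_of_even {d : ℕ} (hd : d = 2 ∨ d = 6 ∨ d = 10) :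
    span {X ^ d - 1, fPoly} = span {X ^ (d / 2) + 1} := by
  unfold fPoly
  rcases hd with rfl | rfl | rfl
  · exact span_pair_eq_span_singleton_of_dvd ⟨X - 1, by ring⟩
      ⟨1 - 2 * X + 3 * X ^ 2 - 3 * X ^ 3 + 3 * X ^ 4 - 2 * X ^ 5 + X ^ 6, by ring⟩
      (mem_span_pair.mpr ⟨-2 * X + X ^ 2 - 2 * X ^ 3 + X ^ 4 - X ^ 5, 1, by ring⟩)
  · exact span_pair_eq_span_singleton_of_dvd ⟨X ^ 3 - 1, by ring⟩
      ⟨1 - X + X ^ 2 - X ^ 3 + X ^ 4, by ring⟩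
      (mem_span_pair.mpr ⟨-1 + X - X ^ 2, X, by ring⟩)
  · exact span_pair_eq_span_singleton_of_dvd ⟨X ^ 5 - 1, by ring⟩ ⟨1 - X + X ^ 2, by ring⟩
      (mem_span_pair.mpr ⟨-1 + X, X + X ^ 2 - X ^ 4, by ring⟩)

theorem span_X_pow_sub_one_fPoly_fifteen : span {X ^ 15 - 1, fPoly} = span {fPoly, 2} := by
  obtain ⟨v, hv⟩ : ∃ v, X ^ 15 - 1 + 2 = v * fPoly :=
    ⟨1 + X - X ^ 3 - X ^ 4 - X ^ 5 + X ^ 7 + X ^ 8, by unfold fPoly; ring⟩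
  rw [span_pair_comm]
  exact span_pair_eq_span_pair_of_mem (mem_span_pair.mpr ⟨v, -1, by linear_combination -hv⟩)
    (mem_span_pair.mpr ⟨v, -1, by linear_combination -hv⟩)

theorem span_X_pow_sub_one_fPoly_thirty : span {X ^ 30 - 1, fPoly} = span {fPoly} :=
  span_pair_eq_span_singleton_of_dvd fPoly_dvd_X_pow_sub_one dvd_rfl
    (subset_span (Set.mem_insert_of_mem _ rfl))

end

noncomputable def cokerEquivQuotientGcd {k : ℕ} (hk : k ≠ 0) :
    coker ((1 - cycMat k + cycMat k ^ 2) * (1 + cycMat k ^ 5)) ≃+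
      ℤ[X] ⧸ Ideal.span {X ^ Nat.gcd 30 k - 1, fPoly} :=
  aeval_fPoly (cycMat k) ▸ (cokerAevalCycMatEquiv hk fPoly).trans
    (Ideal.quotEquivOfEq (Ideal.span_pow_sub_one_pair_eq_gcd fPoly_dvd_X_pow_sub_one k)).toAddEquiv

theorem stmt_18 (k : ℕ) (hk : 1 ≤ k) (d : ℕ) (hd : d = Nat.gcd 30 k) :
    (d = 1 ∨ d = 3 ∨ d = 5 → Nonempty (coker ((1 - cycMat k + cycMat k ^ 2) * (1 + cycMat k ^ 5)) ≃+ (Fin d → ZMod 2))) ∧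
    (d = 15 → Nonempty (coker ((1 - cycMat k + cycMat k ^ 2) * (1 + cycMat k ^ 5)) ≃+ (Fin 7 → ZMod 2))) ∧
    (d = 2 ∨ d = 6 ∨ d = 10 → Nonempty (coker ((1 - cycMat k + cycMat k ^ 2) * (1 + cycMat k ^ 5)) ≃+ (Fin (d / 2) → ℤ))) ∧
    (d = 30 → Nonempty (coker ((1 - cycMat k + cycMat k ^ 2) * (1 + cycMat k ^ 5)) ≃+ (Fin 7 → ℤ))) := by
  have e := cokerEquivQuotientGcd (k := k) (by omega)
  rw [← hd] at e
  refine ⟨fun h => ?_, fun h => ?_, fun h => ?_, fun h => ?_⟩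
  · have hd0 : d ≠ 0 := by omega
    rw [span_X_pow_sub_one_fPoly_of_odd h, ← Nat.cast_ofNat (R := ℤ[X]) (n := 2)] at e
    exact ⟨e.trans (quotientSpanNatCastEquivPi (monic_X_pow_sub_one hd0)
      (natDegree_X_pow_sub_one d) 2)⟩
  · rw [h, span_X_pow_sub_one_fPoly_fifteen, ← Nat.cast_ofNat (R := ℤ[X]) (n := 2)] at e
    exact ⟨e.trans (quotientSpanNatCastEquivPi fPoly_monic fPoly_natDegree 2)⟩
  · have hd0 : d / 2 ≠ 0 := by omega
    rw [span_X_pow_sub_one_fPoly_of_even h] at e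
    exact ⟨e.trans ((monic_X_pow_add_C 1 hd0).quotientSpanEquivPi natDegree_X_pow_add_C).toAddEquiv⟩
  · rw [h, span_X_pow_sub_one_fPoly_thirty] at e
    exact ⟨e.trans (fPoly_monic.quotientSpanEquivPi fPoly_natDegree).toAddEquiv⟩
end
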